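/- arXiv:1112.0415 — 7 statements merged into one kernel-verified Lean document; each statement's English description precedes it below -/
import Mathlib

section
/- There exists a constant C > 0 such that for every u ∈ L²((0,1),ℂ) and every continuously differentiable function ψ : [0,1] → ℂ with ψ(0) = ψ(1), one has |∫₀¹ u(x)·conj(ψ(x))dx| ≤ C·(‖Pu‖_{L²(0,1)} + |μ₀(u)|)·(‖ψ‖²_{L²(0,1)} + ‖ψ′‖²_{L²(0,1)})^{1/2}. -/
open MeasureTheory intervalIntegral

/-- `𝓘g(x) = ∫₀ˣ g(y) dy` -/
noncomputable def Iprim (g : ℝ → ℂ) (x : ℝ) : ℂ := ∫ y in (0:ℝ)..x, g y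

/-- `Pg(x) = 𝓘g(x) − ∫₀¹ 𝓘g(z) dz` -/
noncomputable def Pfun (g : ℝ → ℂ) (x : ℝ) : ℂ := Iprim g x - ∫ z in (0:ℝ)..1, Iprim g z

/-- `μ₀(g) = ∫₀¹ g(x) dx` -/
noncomputable def mu0 (g : ℝ → ℂ) : ℂ := ∫ x in (0:ℝ)..1, g x

/-!
Since `u` is only in `L²`, integrate by parts against the primitive `𝓘u` via Fubini on a
triangle: `∫ u ψ̄ = μ₀(u) ψ̄(1) - ∫ 𝓘u ψ̄'`. Periodicity of `ψ` makes `ψ'` mean-free, so `𝓘u`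
may be replaced by `Pu`, and Cauchy–Schwarz bounds the second term by `‖Pu‖ ‖ψ'‖`. The first
term is handled by the one-dimensional Sobolev bound `|ψ(1)| ≤ ‖ψ‖_{L¹} + ‖ψ'‖_{L¹}
≤ ‖ψ‖ + ‖ψ'‖`; altogether `C = 2` works.
-/

open Set

section

variable {E F : Type*} [NormedAddCommGroup E] [NormedAddCommGroup F] {a b : ℝ}

theorem ContinuousOn.memLp_restrict_Ioc {f : ℝ → E} (hf : ContinuousOn f (Icc a b))
    (p : ENNReal) : MemLp f p (volume.restrict (Ioc a b)) := by
  obtain ⟨C, hC⟩ := isCompact_Icc.exists_bound_of_continuousOn hf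
  refine MemLp.of_bound ((hf.mono Ioc_subset_Icc_self).aestronglyMeasurable measurableSet_Ioc) C ?_
  filter_upwards [ae_restrict_mem measurableSet_Ioc] with x hx
  exact hC x (Ioc_subset_Icc_self hx)

theorem integral_norm_mul_norm_le_of_continuousOn (hab : a ≤ b) {f : ℝ → E} {g : ℝ → F}
    (hf : ContinuousOn f (Icc a b)) (hg : ContinuousOn g (Icc a b)) :
    ∫ x in a..b, ‖f x‖ * ‖g x‖ ≤ √(∫ x in a..b, ‖f x‖ ^ 2) * √(∫ x in a..b, ‖g x‖ ^ 2) := by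
  have h := integral_mul_norm_le_Lp_mul_Lq Real.HolderConjugate.two_two
    (hf.norm.memLp_restrict_Ioc _) (hg.norm.memLp_restrict_Ioc _)
  simpa only [norm_norm, ← integral_of_le hab, Real.rpow_two, ← Real.sqrt_eq_rpow] using h

theorem norm_integral_mul_le_of_continuousOn {R : Type*} [NormedRing R] [NormedSpace ℝ R]
    (hab : a ≤ b) {f g : ℝ → R} (hf : ContinuousOn f (Icc a b)) (hg : ContinuousOn g (Icc a b)) :
    ‖∫ x in a..b, f x * g x‖ ≤ √(∫ x in a..b, ‖f x‖ ^ 2) * √(∫ x in a..b, ‖g x‖ ^ 2) := by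
  refine (intervalIntegral.norm_integral_le_integral_norm hab).trans
    ((integral_mono_on hab ?_ ?_ fun x _ => norm_mul_le _ _).trans
      (integral_norm_mul_norm_le_of_continuousOn hab hf hg))
  · exact (hf.mul hg).norm.intervalIntegrable_of_Icc hab
  · exact (hf.norm.mul hg.norm).intervalIntegrable_of_Icc hab

theorem integral_norm_le_sqrt_integral_norm_sq {f : ℝ → E} (hf : ContinuousOn f (Icc 0 1)) :
    ∫ x in (0:ℝ)..1, ‖f x‖ ≤ √(∫ x in (0:ℝ)..1, ‖f x‖ ^ 2) := by
  simpa using integral_norm_mul_norm_le_of_continuousOn zero_le_one hf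
    (continuousOn_const (c := (1 : ℂ)))

end

section

variable {E : Type*} [NormedAddCommGroup E] [NormedSpace ℝ E] [CompleteSpace E]
  {a b : ℝ} {f f' : ℝ → E}

theorem integral_eq_sub_of_hasDerivWithinAt_Icc
    (hf : ∀ x ∈ Icc a b, HasDerivWithinAt f (f' x) (Icc a b) x) (hf' : ContinuousOn f' (Icc a b))
    {t : ℝ} (ht : t ∈ Icc a b) : ∫ y in t..b, f' y = f b - f t := by
  have hsub : Icc t b ⊆ Icc a b := Icc_subset_Icc_left ht.1
  refine integral_eq_sub_of_hasDeriv_right_of_le ht.2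
    (fun x hx => (hf x (hsub hx)).continuousWithinAt.mono hsub) (fun x hx => ?_)
    ((hf'.mono hsub).intervalIntegrable_of_Icc ht.2)
  exact ((hf x (hsub (Ioo_subset_Icc_self hx))).hasDerivAt
    (Icc_mem_nhds (ht.1.trans_lt hx.1) hx.2)).hasDerivWithinAt

theorem sub_mul_norm_le_integral_norm_add (hab : a ≤ b)
    (hf : ∀ x ∈ Icc a b, HasDerivWithinAt f (f' x) (Icc a b) x) (hf' : ContinuousOn f' (Icc a b)) :
    (b - a) * ‖f b‖ ≤ (∫ x in a..b, ‖f x‖) + (b - a) * ∫ x in a..b, ‖f' x‖ := by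
  have hpointwise : ∀ x ∈ Icc a b, ‖f b‖ ≤ ‖f x‖ + ∫ y in a..b, ‖f' y‖ := by
    intro x hx
    calc ‖f b‖ = ‖f x + ∫ y in x..b, f' y‖ := by
          rw [integral_eq_sub_of_hasDerivWithinAt_Icc hf hf' hx, add_sub_cancel]
      _ ≤ ‖f x‖ + ∫ y in x..b, ‖f' y‖ :=
          (norm_add_le _ _).trans
            (add_le_add le_rfl (intervalIntegral.norm_integral_le_integral_norm hx.2))
      _ ≤ ‖f x‖ + ∫ y in a..b, ‖f' y‖ := by
          gcongr
          exact integral_mono_interval hx.1 hx.2 le_rfl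
            (Filter.Eventually.of_forall fun y => norm_nonneg _)
            (hf'.norm.intervalIntegrable_of_Icc hab)
  have hfn : IntervalIntegrable (fun x => ‖f x‖) volume a b :=
    (ContinuousOn.norm fun x hx => (hf x hx).continuousWithinAt).intervalIntegrable_of_Icc hab
  have h := integral_mono_on hab intervalIntegrable_const (hfn.add intervalIntegrable_const)
    hpointwise
  rwa [intervalIntegral.integral_const, integral_add hfn intervalIntegrable_const,
    intervalIntegral.integral_const, smul_eq_mul, smul_eq_mul] at h

theorem norm_apply_one_le_sqrt_add_sqrt
    (hf : ∀ x ∈ Icc (0:ℝ) 1, HasDerivWithinAt f (f' x) (Icc 0 1) x)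
    (hf' : ContinuousOn f' (Icc 0 1)) :
    ‖f 1‖ ≤ √(∫ x in (0:ℝ)..1, ‖f x‖ ^ 2) + √(∫ x in (0:ℝ)..1, ‖f' x‖ ^ 2) := by
  have h := sub_mul_norm_le_integral_norm_add zero_le_one hf hf'
  simp only [sub_zero, one_mul] at h
  linarith [integral_norm_le_sqrt_integral_norm_sq
    (fun x hx => (hf x hx).continuousWithinAt : ContinuousOn f (Icc 0 1)),
    integral_norm_le_sqrt_integral_norm_sq hf']

end

section

variable {𝕜 : Type*} [RCLike 𝕜] {a b : ℝ}

/-- Fubini on the triangle `a < x ≤ y ≤ b`. -/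
theorem integral_mul_integral_right_eq_integral_primitive_mul (hab : a ≤ b) {u φ : ℝ → 𝕜}
    (hu : IntervalIntegrable u volume a b) (hφ : IntervalIntegrable φ volume a b) :
    ∫ x in a..b, u x * ∫ y in x..b, φ y = ∫ y in a..b, (∫ x in a..y, u x) * φ y := by
  rw [intervalIntegrable_iff_integrableOn_Ioc_of_le hab] at hu hφ
  set ν := volume.restrict (Ioc a b)
  set F : ℝ × ℝ → 𝕜 := {q | q.1 ≤ q.2}.indicator fun q => u q.1 * φ q.2
  have hF : Integrable F (ν.prod ν) :=
    (hu.mul_prod hφ).indicator (measurableSet_le measurable_fst measurable_snd)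
  have hinner_left : ∀ x ∈ Ioc a b, ∫ y, F (x, y) ∂ν = u x * ∫ y in x..b, φ y := by
    intro x hx
    have hslice : (fun y => F (x, y)) = (Ici x).indicator fun y => u x * φ y := by
      ext y; simp [F, indicator_apply]
    have hset : Ici x ∩ Ioc a b = Icc x b := by
      ext y
      simp only [mem_inter_iff, mem_Ici, mem_Ioc, mem_Icc]
      exact ⟨fun h => ⟨h.1, h.2.2⟩, fun h => ⟨h.1, hx.1.trans_le h.1, h.2⟩⟩
    rw [hslice, MeasureTheory.integral_indicator measurableSet_Ici,
      Measure.restrict_restrict measurableSet_Ici, hset, MeasureTheory.integral_const_mul,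
      integral_Icc_eq_integral_Ioc, ← integral_of_le hx.2]
  have hinner_right : ∀ y ∈ Ioc a b, ∫ x, F (x, y) ∂ν = (∫ x in a..y, u x) * φ y := by
    intro y hy
    have hslice : (fun x => F (x, y)) = (Iic y).indicator fun x => u x * φ y := by
      ext x; simp [F, indicator_apply]
    have hset : Iic y ∩ Ioc a b = Ioc a y := by
      ext x
      simp only [mem_inter_iff, mem_Iic, mem_Ioc]
      exact ⟨fun h => ⟨h.2.1, h.1⟩, fun h => ⟨h.2, h.1, h.2.trans hy.2⟩⟩
    rw [hslice, MeasureTheory.integral_indicator measurableSet_Iic,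
      Measure.restrict_restrict measurableSet_Iic, hset, MeasureTheory.integral_mul_const,
      ← integral_of_le hy.1.le]
  calc ∫ x in a..b, u x * ∫ y in x..b, φ y
      = ∫ x, ∫ y, F (x, y) ∂ν ∂ν :=
        (integral_of_le hab).trans (setIntegral_congr_fun measurableSet_Ioc hinner_left).symm
    _ = ∫ y, ∫ x, F (x, y) ∂ν ∂ν := integral_integral_swap hF
    _ = ∫ y in a..b, (∫ x in a..y, u x) * φ y :=
        (setIntegral_congr_fun measurableSet_Ioc hinner_right).trans (integral_of_le hab).symm

theorem integral_mul_eq_integral_mul_sub_integral_primitive_mul (hab : a ≤ b) {u g g' : ℝ → 𝕜}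
    (hu : IntervalIntegrable u volume a b)
    (hg : ∀ x ∈ Icc a b, HasDerivWithinAt g (g' x) (Icc a b) x) (hg' : ContinuousOn g' (Icc a b)) :
    ∫ x in a..b, u x * g x = (∫ x in a..b, u x) * g b - ∫ x in a..b, (∫ y in a..x, u y) * g' x := by
  have htail : ContinuousOn (fun x => ∫ y in x..b, g' y) (uIcc a b) :=
    continuousOn_primitive_interval_left (by rw [uIcc_of_le hab]; exact hg'.integrableOn_Icc)
  have hsplit : EqOn (fun x => u x * g x) (fun x => u x * g b - u x * ∫ y in x..b, g' y)
      (uIcc a b) := by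
    intro x hx
    rw [uIcc_of_le hab] at hx
    simp only [integral_eq_sub_of_hasDerivWithinAt_Icc hg hg' hx]
    ring
  rw [integral_congr hsplit, integral_sub (hu.mul_const _) (hu.mul_continuousOn htail),
    intervalIntegral.integral_mul_const, integral_mul_integral_right_eq_integral_primitive_mul hab hu
      (hg'.intervalIntegrable_of_Icc hab)]

end

theorem continuousOn_Pfun {u : ℝ → ℂ} (hu : IntervalIntegrable u volume 0 1) :
    ContinuousOn (Pfun u) (Icc 0 1) := by
  have h := continuousOn_primitive_interval' hu (left_mem_uIcc (a := (0:ℝ)) (b := 1))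
  rw [uIcc_of_le zero_le_one] at h
  exact h.sub continuousOn_const

/-- For periodic `g`, the mean of `g'` vanishes, so `𝓘u` may be recentred to `Pu`. -/
theorem integral_mul_eq_mu0_mul_sub_integral_Pfun_mul {u g g' : ℝ → ℂ}
    (hu : IntervalIntegrable u volume 0 1)
    (hg : ∀ x ∈ Icc (0:ℝ) 1, HasDerivWithinAt g (g' x) (Icc 0 1) x)
    (hg' : ContinuousOn g' (Icc 0 1)) (hper : g 0 = g 1) :
    ∫ x in (0:ℝ)..1, u x * g x = mu0 u * g 1 - ∫ x in (0:ℝ)..1, Pfun u x * g' x := by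
  have hmean : ∫ x in (0:ℝ)..1, g' x = 0 := by
    rw [integral_eq_sub_of_hasDerivWithinAt_Icc hg hg' (left_mem_Icc.2 zero_le_one), hper,
      sub_self]
  have hrecentre : ∫ x in (0:ℝ)..1, Iprim u x * g' x = ∫ x in (0:ℝ)..1, Pfun u x * g' x := by
    have hsplit : (fun x => Iprim u x * g' x) =
        fun x => Pfun u x * g' x + (∫ z in (0:ℝ)..1, Iprim u z) * g' x := by
      ext x
      simp only [Pfun]
      ring
    have hPg : IntervalIntegrable (fun x => Pfun u x * g' x) volume 0 1 :=
      ((continuousOn_Pfun hu).mul hg').intervalIntegrable_of_Icc zero_le_one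
    rw [hsplit, integral_add hPg ((hg'.intervalIntegrable_of_Icc zero_le_one).const_mul _),
      intervalIntegral.integral_const_mul, hmean, mul_zero, add_zero]
  rw [integral_mul_eq_integral_mul_sub_integral_primitive_mul zero_le_one hu hg hg', mu0,
    ← hrecentre]
  rfl

/-- There is `C > 0` such that for every `u ∈ L²((0,1),ℂ)` and every continuously
differentiable `ψ : [0,1] → ℂ` with `ψ(0) = ψ(1)`:
`|∫₀¹ u ψ̄| ≤ C (‖Pu‖_{L²} + |μ₀(u)|) (‖ψ‖²_{L²} + ‖ψ′‖²_{L²})^{1/2}`. -/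
theorem stmt2 :
    ∃ C : ℝ, 0 < C ∧
      ∀ (u : ℝ → ℂ), MemLp u 2 (volume.restrict (Set.Ioo (0:ℝ) 1)) →
      ∀ (ψ ψ' : ℝ → ℂ),
        (∀ x ∈ Set.Icc (0:ℝ) 1, HasDerivWithinAt ψ (ψ' x) (Set.Icc (0:ℝ) 1) x) →
        ContinuousOn ψ' (Set.Icc (0:ℝ) 1) →
        ψ 0 = ψ 1 →
        ‖∫ x in (0:ℝ)..1, u x * (starRingEnd ℂ) (ψ x)‖ ≤
          C * ((∫ x in (0:ℝ)..1, ‖Pfun u x‖ ^ 2) ^ ((1:ℝ)/2) + ‖mu0 u‖) *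
            ((∫ x in (0:ℝ)..1, ‖ψ x‖ ^ 2) + (∫ x in (0:ℝ)..1, ‖ψ' x‖ ^ 2)) ^ ((1:ℝ)/2) := by
  refine ⟨2, two_pos, fun u hu ψ ψ' hψ hψ' hper => ?_⟩
  have hu1 : IntervalIntegrable u volume 0 1 :=
    (intervalIntegrable_iff_integrableOn_Ioo_of_le zero_le_one).2 (hu.integrable one_le_two)
  have hψconj : ∀ x ∈ Icc (0:ℝ) 1, HasDerivWithinAt (fun x => (starRingEnd ℂ) (ψ x))
      ((starRingEnd ℂ) (ψ' x)) (Icc 0 1) x := fun x hx => (hψ x hx).star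
  have hψ'conj : ContinuousOn (fun x => (starRingEnd ℂ) (ψ' x)) (Icc 0 1) := hψ'.star
  rw [integral_mul_eq_mu0_mul_sub_integral_Pfun_mul hu1 hψconj hψ'conj (congrArg _ hper)]
  have hPψ' := norm_integral_mul_le_of_continuousOn zero_le_one (continuousOn_Pfun hu1) hψ'conj
  simp only [RCLike.norm_conj] at hPψ'
  have hψ1 := norm_apply_one_le_sqrt_add_sqrt hψ hψ'
  set X := ∫ x in (0:ℝ)..1, ‖ψ x‖ ^ 2
  set Y := ∫ x in (0:ℝ)..1, ‖ψ' x‖ ^ 2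
  have hX : 0 ≤ X := integral_nonneg zero_le_one fun x _ => by positivity
  have hY : 0 ≤ Y := integral_nonneg zero_le_one fun x _ => by positivity
  simp only [← Real.sqrt_eq_rpow]
  calc _ ≤ ‖mu0 u‖ * ‖ψ 1‖ + ‖∫ x in (0:ℝ)..1, Pfun u x * (starRingEnd ℂ) (ψ' x)‖ := by
        rw [← RCLike.norm_conj (ψ 1), ← norm_mul]
        exact norm_sub_le _ _
    _ ≤ _ := by
        nlinarith [Real.sqrt_le_sqrt (le_add_of_nonneg_right hY : X ≤ X + Y),
          Real.sqrt_le_sqrt (le_add_of_nonneg_left hX : Y ≤ X + Y), norm_nonneg (mu0 u),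
          Real.sqrt_nonneg (∫ x in (0:ℝ)..1, ‖Pfun u x‖ ^ 2), Real.sqrt_nonneg X,
          Real.sqrt_nonneg Y]
end

section
/- There is no constant C > 0 such that |μ₁(g)| ≤ C·(‖Pg‖²_{L²(0,1)} + |μ₀(g)|²)^{1/2} holds for all g ∈ L²((0,1),ℂ); i.e., the first-moment functional μ₁ is unbounded with respect to the H⁻¹(T)-type norm on L²(0,1). -/
open MeasureTheory intervalIntegral

/-- `μ₁(g) = ∫₀¹ (1−x) g(x) dx` -/
noncomputable def mu1 (g : ℝ → ℂ) : ℂ := ∫ x in (0:ℝ)..1, ((1 - x : ℝ) : ℂ) * g x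

/-!
Let `D_n(x) = xⁿ + (1 - x)ⁿ` and test with `g_n = -D_n'`. Its primitive is `1 - D_n`, which
vanishes at both endpoints, so `μ₀(g_n) = 0`, and integrating by parts
`μ₁(g_n) = ∫₀¹ (1 - D_n) = 1 - 2/(n+1) → 1`. On the other hand `P g_n = 2/(n+1) - D_n` is a
difference of two functions with values in `[0, 1]`, so its square is at most `2/(n+1) + D_n`,
whose integral is `4/(n+1) → 0`.
-/

open Set Filter Topology

theorem ContinuousOn.memLp_restrict_Ioo {E : Type*} [NormedAddCommGroup E] {g : ℝ → E}
    {a b : ℝ} (hg : ContinuousOn g (Icc a b)) (p : ENNReal) :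
    MemLp g p (volume.restrict (Ioo a b)) := by
  obtain ⟨C, hC⟩ := isCompact_Icc.exists_bound_of_continuousOn hg
  refine .of_bound ((hg.mono Ioo_subset_Icc_self).aestronglyMeasurable measurableSet_Ioo) C ?_
  exact ae_restrict_of_forall_mem measurableSet_Ioo fun x hx ↦ hC x (Ioo_subset_Icc_self hx)

theorem sq_sub_le_add_of_mem_Icc {a b : ℝ} (ha : a ∈ Icc (0:ℝ) 1) (hb : b ∈ Icc (0:ℝ) 1) :
    (a - b) ^ 2 ≤ a + b := by
  obtain ⟨ha0, ha1⟩ := ha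
  obtain ⟨hb0, hb1⟩ := hb
  nlinarith

section Antiderivative

variable {H h : ℝ → ℝ}

theorem Iprim_ofReal_of_hasDerivAt (hH : ∀ x, HasDerivAt H (h x) x) (hh : Continuous h)
    (x : ℝ) : Iprim (fun y ↦ (h y : ℂ)) x = ((H x - H 0 : ℝ) : ℂ) := by
  rw [Iprim, intervalIntegral.integral_ofReal,
    integral_eq_sub_of_hasDerivAt (fun y _ ↦ hH y) (hh.intervalIntegrable 0 x)]

theorem mu0_ofReal_of_hasDerivAt (hH : ∀ x, HasDerivAt H (h x) x) (hh : Continuous h) :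
    mu0 (fun y ↦ (h y : ℂ)) = ((H 1 - H 0 : ℝ) : ℂ) :=
  Iprim_ofReal_of_hasDerivAt hH hh 1

theorem mu1_ofReal_of_hasDerivAt (hH : ∀ x, HasDerivAt H (h x) x) (hh : Continuous h) :
    mu1 (fun y ↦ (h y : ℂ)) = (((∫ x in (0:ℝ)..1, H x) - H 0 : ℝ) : ℂ) := by
  have hparts := integral_mul_deriv_eq_deriv_mul (a := 0) (b := 1) (u := fun x ↦ 1 - x)
    (u' := fun _ ↦ -1) (fun x _ ↦ by simpa using (hasDerivAt_id x).const_sub 1)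
    (fun x _ ↦ hH x) intervalIntegrable_const (hh.intervalIntegrable 0 1)
  simp only [sub_self, zero_mul, sub_zero, one_mul, neg_one_mul, intervalIntegral.integral_neg,
    sub_neg_eq_add] at hparts
  simp_rw [mu1, ← Complex.ofReal_mul]
  rw [intervalIntegral.integral_ofReal, hparts]
  ring_nf

theorem Pfun_ofReal_of_hasDerivAt (hH : ∀ x, HasDerivAt H (h x) x) (hh : Continuous h)
    (x : ℝ) : Pfun (fun y ↦ (h y : ℂ)) x = ((H x - ∫ z in (0:ℝ)..1, H z : ℝ) : ℂ) := by
  have hHc : Continuous H := continuous_iff_continuousAt.2 fun x ↦ (hH x).continuousAt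
  simp_rw [Pfun, Iprim_ofReal_of_hasDerivAt hH hh, intervalIntegral.integral_ofReal,
    intervalIntegral.integral_sub (hHc.intervalIntegrable 0 1) intervalIntegrable_const]
  simp only [intervalIntegral.integral_const, sub_zero, one_smul]
  push_cast
  ring

end Antiderivative

noncomputable def endPow (n : ℕ) (x : ℝ) : ℝ := x ^ n + (1 - x) ^ n

section EndPow

variable {n : ℕ}

theorem continuous_endPow (n : ℕ) : Continuous (endPow n) := by
  unfold endPow
  fun_prop

theorem hasDerivAt_endPow (n : ℕ) (x : ℝ) :
    HasDerivAt (endPow n) (n * x ^ (n - 1) - n * (1 - x) ^ (n - 1)) x := by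
  have hsub : HasDerivAt (fun y : ℝ ↦ (1 - y) ^ n) (n * (1 - x) ^ (n - 1) * (-1)) x := by
    simpa using ((hasDerivAt_id x).const_sub 1).fun_pow n
  exact ((hasDerivAt_pow n x).add hsub).congr_deriv (by ring)

theorem deriv_endPow (n : ℕ) :
    deriv (endPow n) = fun x : ℝ ↦ n * x ^ (n - 1) - n * (1 - x) ^ (n - 1) :=
  funext fun x ↦ (hasDerivAt_endPow n x).deriv

theorem continuous_deriv_endPow (n : ℕ) : Continuous (deriv (endPow n)) := by
  rw [deriv_endPow]
  fun_prop

theorem hasDerivAt_neg_endPow (n : ℕ) (x : ℝ) :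
    HasDerivAt (fun y ↦ -endPow n y) (-deriv (endPow n) x) x :=
  ((hasDerivAt_endPow n x).congr_deriv (congrFun (deriv_endPow n) x).symm).neg

theorem endPow_apply_zero (hn : n ≠ 0) : endPow n 0 = 1 := by simp [endPow, hn]

theorem endPow_apply_one (hn : n ≠ 0) : endPow n 1 = 1 := by simp [endPow, hn]

theorem endPow_mem_Icc (hn : n ≠ 0) {x : ℝ} (hx : x ∈ Icc (0:ℝ) 1) :
    endPow n x ∈ Icc (0:ℝ) 1 := by
  obtain ⟨hx0, hx1⟩ := hx
  have hleft : x ^ n ≤ x := pow_le_of_le_one hx0 hx1 hn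
  have hright : (1 - x) ^ n ≤ 1 - x := pow_le_of_le_one (by linarith) (by linarith) hn
  exact ⟨by unfold endPow; positivity, by unfold endPow; linarith⟩

theorem integral_endPow (n : ℕ) : ∫ x in (0:ℝ)..1, endPow n x = 2 / (n + 1) := by
  have hright : ∫ x in (0:ℝ)..1, (1 - x) ^ n = 1 / (n + 1) := by
    simp [intervalIntegral.integral_comp_sub_left (fun x : ℝ ↦ x ^ n) 1]
  have hcont : Continuous fun x : ℝ ↦ (1 - x) ^ n := by fun_prop
  unfold endPow
  rw [intervalIntegral.integral_add (by simp) (hcont.intervalIntegrable 0 1), hright,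
    integral_pow]
  ring

theorem mu0_neg_deriv_endPow (hn : n ≠ 0) :
    mu0 (fun x ↦ ((-deriv (endPow n) x : ℝ) : ℂ)) = 0 := by
  rw [mu0_ofReal_of_hasDerivAt (hasDerivAt_neg_endPow n) (continuous_deriv_endPow n).neg,
    endPow_apply_zero hn, endPow_apply_one hn]
  simp

theorem mu1_neg_deriv_endPow (hn : n ≠ 0) :
    mu1 (fun x ↦ ((-deriv (endPow n) x : ℝ) : ℂ)) = ((1 - 2 / (n + 1) : ℝ) : ℂ) := by
  rw [mu1_ofReal_of_hasDerivAt (hasDerivAt_neg_endPow n) (continuous_deriv_endPow n).neg,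
    intervalIntegral.integral_neg, integral_endPow, endPow_apply_zero hn]
  push_cast
  ring

theorem integral_norm_Pfun_neg_deriv_endPow_sq_le (hn : n ≠ 0) :
    ∫ x in (0:ℝ)..1, ‖Pfun (fun x ↦ ((-deriv (endPow n) x : ℝ) : ℂ)) x‖ ^ 2 ≤ 4 / (n + 1) := by
  have hPfun : ∀ x, ‖Pfun (fun x ↦ ((-deriv (endPow n) x : ℝ) : ℂ)) x‖ ^ 2
      = (2 / (n + 1) - endPow n x) ^ 2 := by
    intro x
    rw [Pfun_ofReal_of_hasDerivAt (hasDerivAt_neg_endPow n) (continuous_deriv_endPow n).neg,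
      intervalIntegral.integral_neg, integral_endPow, Complex.norm_real, Real.norm_eq_abs,
      sq_abs]
    ring
  have hmean : 2 / ((n:ℝ) + 1) ∈ Icc (0:ℝ) 1 := by
    refine ⟨by positivity, (div_le_one (by positivity)).2 ?_⟩
    have : (1:ℝ) ≤ n := by exact_mod_cast Nat.one_le_iff_ne_zero.2 hn
    linarith
  calc ∫ x in (0:ℝ)..1, ‖Pfun (fun x ↦ ((-deriv (endPow n) x : ℝ) : ℂ)) x‖ ^ 2
      = ∫ x in (0:ℝ)..1, (2 / (n + 1) - endPow n x) ^ 2 := by simp_rw [hPfun]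
    _ ≤ ∫ x in (0:ℝ)..1, (2 / (n + 1) + endPow n x) := by
      refine intervalIntegral.integral_mono_on zero_le_one ?_ ?_ fun x hx ↦
        sq_sub_le_add_of_mem_Icc hmean (endPow_mem_Icc hn hx)
      · exact ((continuous_const.sub (continuous_endPow n)).pow 2).intervalIntegrable 0 1
      · exact (continuous_const.add (continuous_endPow n)).intervalIntegrable 0 1
    _ = 4 / (n + 1) := by
      rw [intervalIntegral.integral_add intervalIntegrable_const
        ((continuous_endPow n).intervalIntegrable 0 1), integral_endPow]
      simp
      ring

end EndPow

/-- There is no `C > 0` such that `|μ₁(g)| ≤ C (‖Pg‖²_{L²} + |μ₀(g)|²)^{1/2}` for all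
`g ∈ L²((0,1),ℂ)`: the functional `μ₁` is unbounded in the `H⁻¹(T)`-type norm. -/
theorem stmt4 :
    ¬ ∃ C : ℝ, 0 < C ∧
      ∀ g : ℝ → ℂ, MemLp g 2 (volume.restrict (Set.Ioo (0:ℝ) 1)) →
        ‖mu1 g‖ ≤ C * ((∫ x in (0:ℝ)..1, ‖Pfun g x‖ ^ 2) + ‖mu0 g‖ ^ 2) ^ ((1:ℝ)/2) := by
  rintro ⟨C, hC, hbound⟩
  set ε : ℕ → ℝ := fun n ↦ 1 / ((n:ℝ) + 1)
  have hε : Tendsto ε atTop (𝓝 0) := tendsto_one_div_add_atTop_nhds_zero_nat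
  have hle : ∀ᶠ n in atTop, 1 - 2 * ε n ≤ C * (4 * ε n) ^ ((1:ℝ)/2) := by
    filter_upwards [eventually_ne_atTop 0] with n hn
    set g : ℝ → ℂ := fun x ↦ ((-deriv (endPow n) x : ℝ) : ℂ)
    have hg : MemLp g 2 (volume.restrict (Ioo 0 1)) :=
      (Complex.continuous_ofReal.comp (continuous_deriv_endPow n).neg).continuousOn
        |>.memLp_restrict_Ioo 2
    have hP : ∫ x in (0:ℝ)..1, ‖Pfun g x‖ ^ 2 ≤ 4 * ε n :=
      (integral_norm_Pfun_neg_deriv_endPow_sq_le hn).trans_eq (by simp only [ε]; ring)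
    calc 1 - 2 * ε n = 1 - 2 / ((n:ℝ) + 1) := by simp only [ε]; ring
      _ ≤ ‖mu1 g‖ := by
        rw [mu1_neg_deriv_endPow hn, Complex.norm_real, Real.norm_eq_abs]
        exact le_abs_self _
      _ ≤ C * ((∫ x in (0:ℝ)..1, ‖Pfun g x‖ ^ 2) + ‖mu0 g‖ ^ 2) ^ ((1:ℝ)/2) := hbound g hg
      _ ≤ C * (4 * ε n) ^ ((1:ℝ)/2) := by
        rw [mu0_neg_deriv_endPow hn, norm_zero, zero_pow two_ne_zero, add_zero]
        gcongr
        exact intervalIntegral.integral_nonneg zero_le_one fun x _ ↦ by positivity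
  have hlim := le_of_tendsto_of_tendsto ((hε.const_mul 2).const_sub 1)
    (((hε.const_mul 4).rpow_const (.inr (by norm_num))).const_mul C) hle
  norm_num at hlim
end

section
/- For every positive integer n, the function u_n(x) := 2π·Σ_{k=1}^n sin(2kπx) satisfies μ₀(u_n) = 0, μ₁(u_n) = Σ_{k=1}^n 1/k, and ‖Pu_n‖²_{L²(0,1)} = (1/2)·Σ_{k=1}^n 1/k². In particular (‖Pu_n‖²_{L²} + |μ₀(u_n)|²)^{1/2} is bounded uniformly in n while μ₁(u_n) → ∞. -/
open MeasureTheory intervalIntegral Filter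

/-- `u_n(x) = 2π Σ_{k=1}^n sin(2kπx)` -/
noncomputable def uSeq (n : ℕ) (x : ℝ) : ℂ :=
  ((2 * Real.pi * ∑ k ∈ Finset.Icc 1 n, Real.sin (2 * (k:ℝ) * Real.pi * x) : ℝ) : ℂ)

/-!
Integrating termwise, `𝓘u_n(x) = Σ_{k=1}^n (1 - cos 2kπx)/k`. Hence `μ₀(u_n) = 𝓘u_n(1) = 0`,
`∫₀¹ 𝓘u_n = H_n` and `Pu_n(x) = -Σ_{k=1}^n cos(2kπx)/k`. Integration by parts against `1 - x`
gives `μ₁(g) = ∫₀¹ 𝓘g`, so `μ₁(u_n) = H_n → ∞`, while orthogonality of the cosines on `(0,1)`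
gives `‖Pu_n‖² = ½ Σ_{k=1}^n 1/k² ≤ ½ ζ(2)`.
-/

open Real Finset

lemma integral_sin_mul_of_ne_zero {c : ℝ} (hc : c ≠ 0) (b : ℝ) :
    ∫ x in (0:ℝ)..b, sin (c * x) = (1 - cos (c * b)) / c := by
  rw [integral_comp_mul_left sin hc, mul_zero, integral_sin, cos_zero, smul_eq_mul,
    inv_mul_eq_div]

lemma integral_cos_two_mul_int_mul_pi_mul (m : ℤ) :
    ∫ x in (0:ℝ)..1, cos (2 * (m:ℝ) * π * x) = if m = 0 then 1 else 0 := by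
  split_ifs with hm
  · simp [hm]
  · have hc : 2 * (m:ℝ) * π ≠ 0 := by simp [hm, pi_ne_zero]
    rw [integral_comp_mul_left cos hc, mul_zero, mul_one, integral_cos, sin_zero, sub_zero,
      show 2 * (m:ℝ) * π = ((2 * m : ℤ) : ℝ) * π by push_cast; ring, sin_int_mul_pi, smul_zero]

lemma integral_cos_two_mul_nat_mul_pi_mul {k : ℕ} (hk : k ≠ 0) :
    ∫ x in (0:ℝ)..1, cos (2 * (k:ℝ) * π * x) = 0 := by
  simpa [hk] using integral_cos_two_mul_int_mul_pi_mul k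

lemma integral_cos_mul_cos {j k : ℕ} (hk : k ≠ 0) :
    ∫ x in (0:ℝ)..1, cos (2 * (j:ℝ) * π * x) * cos (2 * (k:ℝ) * π * x)
      = if j = k then 1 / 2 else 0 := by
  have product_to_sum : ∀ x : ℝ, cos (2 * (j:ℝ) * π * x) * cos (2 * (k:ℝ) * π * x)
      = (cos (2 * ((j - k : ℤ) : ℝ) * π * x) + cos (2 * ((j + k : ℤ) : ℝ) * π * x)) / 2 := by
    intro x
    push_cast
    rw [mul_sub, mul_add, sub_mul, add_mul, sub_mul, add_mul, cos_sub, cos_add]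
    ring
  simp_rw [product_to_sum]
  rw [intervalIntegral.integral_div,
    intervalIntegral.integral_add (Continuous.intervalIntegrable (by fun_prop) _ _)
      (Continuous.intervalIntegrable (by fun_prop) _ _),
    integral_cos_two_mul_int_mul_pi_mul, integral_cos_two_mul_int_mul_pi_mul]
  have hdiff : (j - k : ℤ) = 0 ↔ j = k := by omega
  have hsum : (j + k : ℤ) ≠ 0 := by omega
  simp only [hdiff, hsum, if_false]
  split_ifs <;> norm_num

lemma integral_sq_sum_cos {s : Finset ℕ} (hs : 0 ∉ s) (a : ℕ → ℝ) :
    ∫ x in (0:ℝ)..1, (∑ k ∈ s, a k * cos (2 * (k:ℝ) * π * x)) ^ 2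
      = 1 / 2 * ∑ k ∈ s, a k ^ 2 := by
  have hne : ∀ k ∈ s, k ≠ 0 := fun k hk h => hs (h ▸ hk)
  simp_rw [sq, sum_mul_sum]
  rw [intervalIntegral.integral_finsetSum fun j _ => Continuous.intervalIntegrable (by fun_prop) _ _,
    mul_sum]
  refine sum_congr rfl fun j hj => ?_
  rw [intervalIntegral.integral_finsetSum fun k _ => Continuous.intervalIntegrable (by fun_prop) _ _]
  simp_rw [mul_mul_mul_comm (a j), intervalIntegral.integral_const_mul]
  rw [sum_congr rfl fun k hk => by rw [integral_cos_mul_cos (hne k hk)]]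
  simp only [one_div, mul_ite, mul_zero, sum_ite_eq, hj, ↓reduceIte]
  ring

lemma mu1_eq_integral_Iprim {g : ℝ → ℂ} (hg : Continuous g) :
    mu1 g = ∫ x in (0:ℝ)..1, Iprim g x := by
  have hu : ∀ x ∈ Set.uIcc (0:ℝ) 1, HasDerivAt (fun x : ℝ => ((1 - x : ℝ) : ℂ)) (-1) x :=
    fun x _ => by simpa using ((hasDerivAt_id x).const_sub 1).ofReal_comp
  have hv : ∀ x ∈ Set.uIcc (0:ℝ) 1, HasDerivAt (Iprim g) (g x) x :=
    fun x _ => (hg.integral_hasStrictDerivAt 0 x).hasDerivAt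
  rw [mu1, integral_mul_deriv_eq_deriv_mul hu hv intervalIntegrable_const
    (hg.intervalIntegrable 0 1)]
  simp [Iprim]

lemma Iprim_ofReal (f : ℝ → ℝ) (x : ℝ) :
    Iprim (fun y => (f y : ℂ)) x = ((∫ y in (0:ℝ)..x, f y : ℝ) : ℂ) :=
  intervalIntegral.integral_ofReal

lemma continuous_uSeq (n : ℕ) : Continuous (uSeq n) := by
  unfold uSeq; fun_prop

lemma Iprim_uSeq (n : ℕ) (x : ℝ) :
    Iprim (uSeq n) x = ((∑ k ∈ Icc 1 n, (1 - cos (2 * (k:ℝ) * π * x)) / k : ℝ) : ℂ) := by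
  unfold uSeq
  rw [Iprim_ofReal, intervalIntegral.integral_const_mul,
    intervalIntegral.integral_finsetSum fun k _ => Continuous.intervalIntegrable (by fun_prop) _ _,
    mul_sum]
  congr 1
  refine sum_congr rfl fun k hk => ?_
  have hk0 : (k:ℝ) ≠ 0 := by simp only [mem_Icc, ne_eq, Nat.cast_eq_zero] at hk ⊢; omega
  rw [integral_sin_mul_of_ne_zero (by simp [hk0, pi_ne_zero])]
  field_simp

lemma mu0_uSeq (n : ℕ) : mu0 (uSeq n) = 0 := by
  rw [mu0, ← Iprim, Iprim_uSeq]
  simp [show ∀ k : ℕ, 2 * (k:ℝ) * π = k * (2 * π) by intro k; ring, cos_nat_mul_two_pi]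

lemma integral_Iprim_uSeq (n : ℕ) :
    ∫ x in (0:ℝ)..1, Iprim (uSeq n) x = ((∑ k ∈ Icc 1 n, (1:ℝ) / k : ℝ) : ℂ) := by
  simp_rw [Iprim_uSeq]
  rw [intervalIntegral.integral_ofReal,
    intervalIntegral.integral_finsetSum fun k _ => Continuous.intervalIntegrable (by fun_prop) _ _]
  congr 1
  refine sum_congr rfl fun k hk => ?_
  rw [intervalIntegral.integral_div,
    intervalIntegral.integral_sub intervalIntegrable_const
      (Continuous.intervalIntegrable (by fun_prop) _ _),
    integral_cos_two_mul_nat_mul_pi_mul (by rw [mem_Icc] at hk; omega)]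
  simp

lemma mu1_uSeq (n : ℕ) : mu1 (uSeq n) = ((∑ k ∈ Icc 1 n, (1:ℝ) / k : ℝ) : ℂ) := by
  rw [mu1_eq_integral_Iprim (continuous_uSeq n), integral_Iprim_uSeq]

lemma Pfun_uSeq (n : ℕ) (x : ℝ) :
    Pfun (uSeq n) x = -((∑ k ∈ Icc 1 n, (k:ℝ)⁻¹ * cos (2 * (k:ℝ) * π * x) : ℝ) : ℂ) := by
  rw [Pfun, Iprim_uSeq, integral_Iprim_uSeq, ← Complex.ofReal_sub, ← Complex.ofReal_neg,
    ← sum_sub_distrib, ← sum_neg_distrib]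
  congr 1
  refine sum_congr rfl fun k _ => by ring

lemma integral_norm_Pfun_uSeq_sq (n : ℕ) :
    ∫ x in (0:ℝ)..1, ‖Pfun (uSeq n) x‖ ^ 2 = 1 / 2 * ∑ k ∈ Icc 1 n, (1:ℝ) / (k:ℝ) ^ 2 := by
  simp_rw [Pfun_uSeq, norm_neg, Complex.norm_real, Real.norm_eq_abs, sq_abs]
  rw [integral_sq_sum_cos (by simp)]
  simp

lemma tendsto_sum_Icc_one_div_atTop :
    Tendsto (fun n : ℕ => ∑ k ∈ Icc 1 n, (1:ℝ) / k) atTop atTop := by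
  convert tendsto_sum_range_one_div_nat_succ_atTop using 2 with n
  rw [← Ico_add_one_right_eq_Icc, sum_Ico_eq_sum_range]
  simp [add_comm]

/-- For every positive integer `n`: `μ₀(u_n) = 0`, `μ₁(u_n) = Σ_{k=1}^n 1/k`, and
`‖Pu_n‖²_{L²} = (1/2) Σ_{k=1}^n 1/k²`. In particular `(‖Pu_n‖² + |μ₀(u_n)|²)^{1/2}` is
uniformly bounded while `μ₁(u_n) → ∞`. -/
theorem stmt6 :
    (∀ n : ℕ, 1 ≤ n →
      mu0 (uSeq n) = 0 ∧
      mu1 (uSeq n) = ((∑ k ∈ Finset.Icc 1 n, (1:ℝ)/(k:ℝ)) : ℝ) ∧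
      (∫ x in (0:ℝ)..1, ‖Pfun (uSeq n) x‖ ^ 2) = (1/2) * ∑ k ∈ Finset.Icc 1 n, (1:ℝ)/(k:ℝ)^2) ∧
    (∃ M : ℝ, ∀ n : ℕ,
      ((∫ x in (0:ℝ)..1, ‖Pfun (uSeq n) x‖ ^ 2) + ‖mu0 (uSeq n)‖ ^ 2) ^ ((1:ℝ)/2) ≤ M) ∧
    Tendsto (fun n : ℕ => ‖mu1 (uSeq n)‖) atTop atTop := by
  refine ⟨fun n _ => ⟨mu0_uSeq n, mu1_uSeq n, integral_norm_Pfun_uSeq_sq n⟩,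
    ⟨(1 / 2 * ∑' k : ℕ, 1 / (k:ℝ) ^ 2) ^ ((1:ℝ) / 2), fun n => ?_⟩, ?_⟩
  · rw [integral_norm_Pfun_uSeq_sq, mu0_uSeq, norm_zero, zero_pow two_ne_zero, add_zero]
    gcongr
    exact (summable_one_div_nat_pow.mpr one_lt_two).sum_le_tsum _ fun k _ => by positivity
  · have hmu1 : ∀ n, ‖mu1 (uSeq n)‖ = ∑ k ∈ Icc 1 n, (1:ℝ) / k := fun n => by
      rw [mu1_uSeq, Complex.norm_real, Real.norm_of_nonneg (by positivity)]
    simpa only [hmu1] using tendsto_sum_Icc_one_div_atTop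
end

section
/- Let Y be a linear subspace of ℂ² with Y ≠ {0} and Y ≠ {0} × ℂ. Then for every g ∈ L²((0,1),ℂ) and every ε > 0 there exists f ∈ L²((0,1),ℂ) with (μ₀(f), μ₁(f)) ∈ Y such that (‖P(g−f)‖²_{L²(0,1)} + |μ₀(g−f)|²)^{1/2} < ε. (Density of V_Y = {f ∈ L² : (μ₀(f),μ₁(f)) ∈ Y} in H⁻¹(T).) -/
open MeasureTheory intervalIntegral

/-!
Pick `(a, b) ∈ Y` with `a ≠ 0`; it exists because `Y` is neither `0` nor `{0} × ℂ`. If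
`μ₀ h = 0` and `μ₁ h = 1`, then `f = g - K h` with `K = μ₁ g - (μ₀ g / a) b` satisfies
`(μ₀ f, μ₁ f) = (μ₀ g / a) • (a, b) ∈ Y`, and the error is `‖K‖ ‖P h‖`. Such `h` with `‖P h‖`
arbitrarily small are rescalings of `(n + 1)((1 - x)ⁿ - xⁿ)`: its primitive
`1 - (1 - x)ⁿ⁺¹ - xⁿ⁺¹` vanishes at both ends but is close to `1` in `L²`, so it has
`μ₀ = 0`, `μ₁ = n / (n + 2)` and `‖P ·‖² ≤ 4 / (n + 2)`.
-/

lemma Continuous.memLp_volume_restrict_Ioo {E : Type*} [NormedAddCommGroup E] {h : ℝ → E}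
    (hc : Continuous h) (p : ENNReal) (a b : ℝ) : MemLp h p (volume.restrict (Set.Ioo a b)) := by
  obtain ⟨C, hC⟩ :=
    (isCompact_Icc (a := a) (b := b)).exists_bound_of_continuousOn hc.continuousOn
  exact MemLp.of_bound hc.aestronglyMeasurable C
    (ae_restrict_of_forall_mem measurableSet_Ioo fun x hx => hC x (Set.Ioo_subset_Icc_self hx))

lemma MeasureTheory.MemLp.intervalIntegrable_of_restrict_Ioo {E : Type*} [NormedAddCommGroup E]
    {g : ℝ → E} {p : ENNReal} {a b : ℝ} (hg : MemLp g p (volume.restrict (Set.Ioo a b)))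
    (hp : 1 ≤ p) (hab : a ≤ b) : IntervalIntegrable g volume a b :=
  (intervalIntegrable_iff_integrableOn_Ioo_of_le hab).2 (hg.integrable hp)

lemma exists_mem_fst_ne_zero {K : Type*} [Field K] {Y : Submodule K (K × K)} (hY0 : Y ≠ ⊥)
    (hY1 : Y ≠ Submodule.span K {((0, 1) : K × K)}) : ∃ p ∈ Y, p.1 ≠ 0 := by
  by_contra! hfst
  obtain ⟨p, hpY, hp0⟩ := Submodule.exists_mem_ne_zero_of_ne_bot hY0
  have hp2 : p.2 ≠ 0 := fun h => hp0 (Prod.ext (hfst p hpY) h)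
  refine hY1 (le_antisymm (fun q hq => Submodule.mem_span_singleton.2 ⟨q.2, ?_⟩) ?_)
  · simp [Prod.ext_iff, hfst q hq]
  · rw [Submodule.span_le, Set.singleton_subset_iff, SetLike.mem_coe]
    convert Y.smul_mem p.2⁻¹ hpY using 1
    ext <;> simp [hfst p hpY, hp2]

lemma Iprim_const_mul (c : ℂ) (h : ℝ → ℂ) (x : ℝ) :
    Iprim (fun y => c * h y) x = c * Iprim h x :=
  intervalIntegral.integral_const_mul c h

lemma Pfun_const_mul (c : ℂ) (h : ℝ → ℂ) (x : ℝ) :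
    Pfun (fun y => c * h y) x = c * Pfun h x := by
  simp only [Pfun, Iprim_const_mul, intervalIntegral.integral_const_mul, mul_sub]

lemma mu0_const_mul (c : ℂ) (h : ℝ → ℂ) : mu0 (fun y => c * h y) = c * mu0 h :=
  intervalIntegral.integral_const_mul c h

lemma mu1_const_mul (c : ℂ) (h : ℝ → ℂ) : mu1 (fun y => c * h y) = c * mu1 h := by
  simp only [mu1, mul_left_comm _ c, intervalIntegral.integral_const_mul]

lemma mu0_sub {f g : ℝ → ℂ} (hf : IntervalIntegrable f volume 0 1)
    (hg : IntervalIntegrable g volume 0 1) : mu0 (fun y => f y - g y) = mu0 f - mu0 g :=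
  intervalIntegral.integral_sub hf hg

lemma mu1_sub {f g : ℝ → ℂ} (hf : IntervalIntegrable f volume 0 1)
    (hg : IntervalIntegrable g volume 0 1) : mu1 (fun y => f y - g y) = mu1 f - mu1 g := by
  have hw : ContinuousOn (fun x : ℝ => ((1 - x : ℝ) : ℂ)) (Set.uIcc 0 1) := by fun_prop
  simp only [mu1, mul_sub]
  exact intervalIntegral.integral_sub (hf.continuousOn_mul hw) (hg.continuousOn_mul hw)

noncomputable def dipole (n : ℕ) (x : ℝ) : ℝ := (n + 1) * ((1 - x) ^ n - x ^ n)

lemma integral_one_sub_pow (k : ℕ) (x : ℝ) :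
    ∫ y in (0:ℝ)..x, (1 - y) ^ k = (1 - (1 - x) ^ (k + 1)) / (k + 1) := by
  simp [integral_comp_sub_left (fun y : ℝ => y ^ k)]

lemma integral_dipole (n : ℕ) (x : ℝ) :
    ∫ y in (0:ℝ)..x, dipole n y = 1 - (1 - x) ^ (n + 1) - x ^ (n + 1) := by
  simp (disch := exact Continuous.intervalIntegrable (by fun_prop) _ _) only [dipole,
    intervalIntegral.integral_const_mul, intervalIntegral.integral_sub, integral_one_sub_pow,
    integral_pow]
  field_simp
  ring

lemma integral_integral_dipole (n : ℕ) :
    ∫ x in (0:ℝ)..1, ∫ y in (0:ℝ)..x, dipole n y = n / (n + 2) := by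
  simp (disch := exact Continuous.intervalIntegrable (by fun_prop) _ _) only [integral_dipole,
    intervalIntegral.integral_sub, integral_one_sub_pow, integral_pow, integral_one]
  field_simp
  push_cast
  ring

lemma integral_one_sub_mul_dipole (n : ℕ) :
    ∫ x in (0:ℝ)..1, (1 - x) * dipole n x = n / (n + 2) := by
  have h (x : ℝ) :
      (1 - x) * dipole n x = (n + 1) * ((1 - x) ^ (n + 1) - x ^ n + x ^ (n + 1)) := by
    simp only [dipole]; ring
  simp (disch := exact Continuous.intervalIntegrable (by fun_prop) _ _) only [h,
    intervalIntegral.integral_const_mul, intervalIntegral.integral_add,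
    intervalIntegral.integral_sub, integral_one_sub_pow, integral_pow]
  field_simp
  push_cast
  ring

lemma mu0_dipole (n : ℕ) : mu0 (fun y => (dipole n y : ℂ)) = 0 := by
  simp [mu0, intervalIntegral.integral_ofReal, integral_dipole]

lemma mu1_dipole (n : ℕ) : mu1 (fun y => (dipole n y : ℂ)) = ((n / (n + 2) : ℝ) : ℂ) := by
  simp only [mu1, ← Complex.ofReal_mul, intervalIntegral.integral_ofReal,
    integral_one_sub_mul_dipole]

lemma Pfun_dipole (n : ℕ) (x : ℝ) :
    Pfun (fun y => (dipole n y : ℂ)) x =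
      ((2 / ((n:ℝ) + 2) - (1 - x) ^ (n + 1) - x ^ (n + 1) : ℝ) : ℂ) := by
  simp only [Pfun, Iprim, intervalIntegral.integral_ofReal]
  rw [integral_integral_dipole, integral_dipole, ← Complex.ofReal_sub]
  congr 1
  field_simp
  ring

lemma integral_norm_Pfun_dipole_sq_le (n : ℕ) :
    ∫ x in (0:ℝ)..1, ‖Pfun (fun y => (dipole n y : ℂ)) x‖ ^ 2 ≤ 4 / ((n:ℝ) + 2) := by
  simp only [Pfun_dipole, Complex.norm_real, Real.norm_eq_abs, sq_abs]
  have hp : (0:ℝ) ≤ 2 / (n + 2) := by positivity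
  calc _ ≤ ∫ x in (0:ℝ)..1, ((2 / ((n:ℝ) + 2)) ^ 2 + (1 - x) ^ (n + 1) + x ^ (n + 1)) := by
        refine integral_mono_on zero_le_one (Continuous.intervalIntegrable (by fun_prop) _ _)
          (Continuous.intervalIntegrable (by fun_prop) _ _) fun x hx => ?_
        -- `(p - s)² ≤ p² + s² ≤ p² + s`, as `0 ≤ s = (1 - x)ⁿ⁺¹ + xⁿ⁺¹ ≤ (1 - x) + x = 1`
        have hq : (1 - x) ^ (n + 1) ≤ 1 - x :=
          pow_le_of_le_one (sub_nonneg.2 hx.2) (by linarith [hx.1]) n.succ_ne_zero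
        have hr : x ^ (n + 1) ≤ x := pow_le_of_le_one hx.1 hx.2 n.succ_ne_zero
        have hq0 : 0 ≤ (1 - x) ^ (n + 1) := pow_nonneg (sub_nonneg.2 hx.2) _
        have hr0 : 0 ≤ x ^ (n + 1) := pow_nonneg hx.1 _
        nlinarith [mul_nonneg hp (add_nonneg hq0 hr0)]
    _ = (2 / ((n:ℝ) + 2)) ^ 2 + 2 / (n + 2) := by
        simp (disch := exact Continuous.intervalIntegrable (by fun_prop) _ _) only
          [intervalIntegral.integral_add, integral_one_sub_pow, integral_pow,
            intervalIntegral.integral_const]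
        push_cast
        ring
    _ ≤ 4 / (n + 2) := by
        rw [div_pow, div_add_div _ _ (by positivity) (by positivity),
          div_le_div_iff₀ (by positivity) (by positivity)]
        nlinarith

lemma exists_mu0_eq_zero_mu1_eq_one_integral_norm_Pfun_sq_lt {δ : ℝ} (hδ : 0 < δ) :
    ∃ h : ℝ → ℂ, Continuous h ∧ mu0 h = 0 ∧ mu1 h = 1 ∧
      ∫ x in (0:ℝ)..1, ‖Pfun h x‖ ^ 2 < δ := by
  obtain ⟨n, hn⟩ := exists_nat_gt (12 / δ)
  have hn0 : (0:ℝ) < n := lt_trans (by positivity) hn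
  refine ⟨fun y => (((n + 2) / n : ℝ) : ℂ) * dipole n y, by unfold dipole; fun_prop,
    ?_, ?_, ?_⟩
  · rw [mu0_const_mul, mu0_dipole, mul_zero]
  · rw [mu1_const_mul, mu1_dipole, ← Complex.ofReal_mul, ← Complex.ofReal_one]
    congr 1
    field_simp
  · simp only [Pfun_const_mul, norm_mul, Complex.norm_real, Real.norm_eq_abs, mul_pow, sq_abs]
    rw [intervalIntegral.integral_const_mul]
    calc ((n + 2) / n : ℝ) ^ 2 * _ ≤ ((n + 2) / n) ^ 2 * (4 / (n + 2)) := by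
          gcongr; exact integral_norm_Pfun_dipole_sq_le n
      _ ≤ 12 / (n : ℝ) := by
        have hn1 : (1:ℝ) ≤ n := Nat.one_le_cast.2 (Nat.cast_pos.1 hn0)
        rw [div_pow, div_mul_div_comm, div_le_div_iff₀ (by positivity) hn0]
        nlinarith [mul_nonneg (mul_nonneg hn0.le (by positivity : (0:ℝ) ≤ n + 2))
          (sub_nonneg.2 hn1)]
      _ < δ := (div_lt_iff₀' hn0).2 ((div_lt_iff₀ hδ).1 hn)

/-- Density of `V_Y = {f ∈ L² : (μ₀(f), μ₁(f)) ∈ Y}` in `H⁻¹(T)` for any subspace `Y` of `ℂ²`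
with `Y ≠ {0}` and `Y ≠ {0}×ℂ`. -/
theorem stmt8 (Y : Submodule ℂ (ℂ × ℂ))
    (hY0 : Y ≠ ⊥)
    (hY1 : Y ≠ Submodule.span ℂ {((0, 1) : ℂ × ℂ)}) :
    ∀ g : ℝ → ℂ, MemLp g 2 (volume.restrict (Set.Ioo (0:ℝ) 1)) →
    ∀ ε : ℝ, 0 < ε →
      ∃ f : ℝ → ℂ, MemLp f 2 (volume.restrict (Set.Ioo (0:ℝ) 1)) ∧
        (mu0 f, mu1 f) ∈ Y ∧
        ((∫ x in (0:ℝ)..1, ‖Pfun (fun y => g y - f y) x‖ ^ 2) +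
          ‖mu0 (fun y => g y - f y)‖ ^ 2) ^ ((1:ℝ)/2) < ε := by
  intro g hg ε hε
  obtain ⟨⟨a, b⟩, habY, ha⟩ := exists_mem_fst_ne_zero hY0 hY1
  set K := mu1 g - mu0 g / a * b
  obtain ⟨h, hc, h0, h1, hP⟩ := exists_mu0_eq_zero_mu1_eq_one_integral_norm_Pfun_sq_lt
    (δ := ε ^ 2 / (‖K‖ ^ 2 + 1)) (by positivity)
  have hKh : Continuous fun y => K * h y := continuous_const.mul hc
  refine ⟨fun y => g y - K * h y, hg.sub (hKh.memLp_volume_restrict_Ioo 2 0 1), ?_, ?_⟩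
  · have hg01 := hg.intervalIntegrable_of_restrict_Ioo one_le_two zero_le_one
    rw [mu0_sub hg01 (hKh.intervalIntegrable 0 1), mu1_sub hg01 (hKh.intervalIntegrable 0 1),
      mu0_const_mul, mu1_const_mul, h0, h1]
    convert Y.smul_mem (mu0 g / a) habY using 1
    ext <;> simp [K, ha]
  · have hgf : (fun y => g y - (g y - K * h y)) = fun y => K * h y := by funext; ring
    simp only [hgf, Pfun_const_mul, mu0_const_mul, h0, norm_mul, mul_pow, mul_zero, norm_zero]
    rw [intervalIntegral.integral_const_mul, ← Real.sqrt_eq_rpow, Real.sqrt_lt' hε]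
    have hP0 : 0 ≤ ∫ x in (0:ℝ)..1, ‖Pfun h x‖ ^ 2 :=
      intervalIntegral.integral_nonneg zero_le_one fun _ _ => by positivity
    rw [lt_div_iff₀ (by positivity)] at hP
    nlinarith
end

section
/- Let λ be a nonzero real number. There exists a function u : [0,1] → ℂ, not identically zero, twice differentiable with u″(x) = −λ²·u(x) for all x ∈ [0,1] and satisfying the moment conditions μ₀(u) = 0 and μ₁(u) = 0, if and only if λ·sin λ + 2·cos λ − 2 = 0. Moreover, in this case every such u is a scalar multiple of the function x ↦ (sin λ − λ)·cos(λx) + (1 − cos λ)·sin(λx); i.e., each such eigenvalue is simple. -/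
/-!
Every solution of `u'' = -ω²u` on `[0,1]` equals `u 0 · cos(ωx) + (u' 0 / ω) · sin(ωx)`, by
uniqueness for the linear first-order system satisfied by `(u, u')`. The moments of
`A cos(ωx) + B sin(ωx)` are `ω⁻¹` and `ω⁻²` times the two rows of the symmetric matrix
`M = [[sin ω, 1 - cos ω], [1 - cos ω, ω - sin ω]]` applied to `(A, B)`, and
`det M = ω sin ω + 2 cos ω - 2`, so a nontrivial solution exists iff this vanishes. In that case
`ω ≠ sin ω` (otherwise `cos ω = 1` and `ω = sin ω = 0`), so the second row alone forces `(A, B)`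
onto the line through `(sin ω - ω, 1 - cos ω)`.
-/

open MeasureTheory intervalIntegral

open Set
open scoped Matrix

theorem eqOn_of_hasDerivWithinAt_continuousLinearMap {E : Type*} [NormedAddCommGroup E]
    [NormedSpace ℝ E] (L : E →L[ℝ] E) {a b : ℝ} {f g : ℝ → E}
    (hf : ∀ x ∈ Icc a b, HasDerivWithinAt f (L (f x)) (Icc a b) x)
    (hg : ∀ x ∈ Icc a b, HasDerivWithinAt g (L (g x)) (Icc a b) x) (ha : f a = g a) :
    EqOn f g (Icc a b) := by
  have hcont : ∀ {h : ℝ → E}, (∀ x ∈ Icc a b, HasDerivWithinAt h (L (h x)) (Icc a b) x) →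
      ContinuousOn h (Icc a b) := fun hh x hx => (hh x hx).continuousWithinAt
  have hright : ∀ {h : ℝ → E}, (∀ x ∈ Icc a b, HasDerivWithinAt h (L (h x)) (Icc a b) x) →
      ∀ x ∈ Ico a b, HasDerivWithinAt h (L (h x)) (Ici x) x := fun hh x hx =>
    (hh x (Ico_subset_Icc_self hx)).mono_of_mem_nhdsWithin (Icc_mem_nhdsGE_of_mem hx)
  exact ODE_solution_unique_of_mem_Icc_right (v := fun _ => L) (s := fun _ => univ)
    (fun _ _ => L.lipschitz.lipschitzOnWith) (hcont hf) (hright hf) (fun _ _ => mem_univ _)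
    (hcont hg) (hright hg) (fun _ _ => mem_univ _) ha

theorem eqOn_of_hasDerivWithinAt_of_eq {ω : ℂ} {a b : ℝ} {u u' v v' : ℝ → ℂ}
    (hu : ∀ x ∈ Icc a b, HasDerivWithinAt u (u' x) (Icc a b) x)
    (hu' : ∀ x ∈ Icc a b, HasDerivWithinAt u' (-ω ^ 2 * u x) (Icc a b) x)
    (hv : ∀ x ∈ Icc a b, HasDerivWithinAt v (v' x) (Icc a b) x)
    (hv' : ∀ x ∈ Icc a b, HasDerivWithinAt v' (-ω ^ 2 * v x) (Icc a b) x)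
    (ha : u a = v a) (ha' : u' a = v' a) :
    EqOn u v (Icc a b) := by
  let L : ℂ × ℂ →L[ℝ] ℂ × ℂ :=
    (ContinuousLinearMap.snd ℝ ℂ ℂ).prod ((-ω ^ 2) • ContinuousLinearMap.fst ℝ ℂ ℂ)
  have hpair := eqOn_of_hasDerivWithinAt_continuousLinearMap L
    (f := fun t => (u t, u' t)) (g := fun t => (v t, v' t))
    (fun x hx => (hu x hx).prodMk (hu' x hx)) (fun x hx => (hv x hx).prodMk (hv' x hx))
    (Prod.ext ha ha')
  exact fun x hx => congrArg Prod.fst (hpair hx)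

noncomputable def cosSin (ω A B : ℂ) (x : ℝ) : ℂ :=
  A * Complex.cos (ω * x) + B * Complex.sin (ω * x)

theorem cosSin_mul (ω A B c : ℂ) (x : ℝ) :
    cosSin ω (c * A) (c * B) x = c * cosSin ω A B x := by
  unfold cosSin; ring

theorem continuous_cosSin (ω A B : ℂ) : Continuous (cosSin ω A B) := by
  unfold cosSin; fun_prop

theorem hasDerivAt_cosSin (ω A B : ℂ) (x : ℝ) :
    HasDerivAt (cosSin ω A B) (cosSin ω (ω * B) (-(ω * A)) x) x := by
  have hlin : HasDerivAt (fun z : ℂ => ω * z) ω x := by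
    simpa using (hasDerivAt_id (x : ℂ)).const_mul ω
  refine (((hlin.ccos.const_mul A).add (hlin.csin.const_mul B)).comp_ofReal).congr_deriv ?_
  unfold cosSin; ring

theorem hasDerivAt_cosSin_neg_sq (ω A B : ℂ) (x : ℝ) :
    HasDerivAt (cosSin ω (ω * B) (-(ω * A))) (-ω ^ 2 * cosSin ω A B x) x :=
  (hasDerivAt_cosSin ω _ _ x).congr_deriv (by unfold cosSin; ring)

theorem eqOn_cosSin_of_hasDerivWithinAt {ω : ℂ} (hω : ω ≠ 0) {b : ℝ} {u u' : ℝ → ℂ}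
    (hu : ∀ x ∈ Icc 0 b, HasDerivWithinAt u (u' x) (Icc 0 b) x)
    (hu' : ∀ x ∈ Icc 0 b, HasDerivWithinAt u' (-ω ^ 2 * u x) (Icc 0 b) x) :
    EqOn u (cosSin ω (u 0) (u' 0 / ω)) (Icc 0 b) :=
  eqOn_of_hasDerivWithinAt_of_eq hu hu'
    (fun x _ => (hasDerivAt_cosSin ω _ _ x).hasDerivWithinAt)
    (fun x _ => (hasDerivAt_cosSin_neg_sq ω _ _ x).hasDerivWithinAt)
    (by simp [cosSin]) (by simp [cosSin, mul_div_cancel₀ _ hω])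

theorem eq_zero_of_eqOn_cosSin_zero {ω A B : ℂ} (hω : ω ≠ 0) {b : ℝ} (hb : 0 < b)
    (h : EqOn (cosSin ω A B) 0 (Icc 0 b)) : A = 0 ∧ B = 0 := by
  have h0 : (0 : ℝ) ∈ Icc 0 b := ⟨le_rfl, hb.le⟩
  have hA : A = 0 := by simpa [cosSin] using h h0
  have hderiv : ω * B = 0 := by
    have hzero : HasDerivWithinAt (cosSin ω A B) 0 (Icc 0 b) 0 :=
      (hasDerivWithinAt_const 0 _ 0).congr (fun x hx => h hx) (h h0)
    have := (uniqueDiffOn_Icc hb 0 h0).eq_deriv _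
      (hasDerivAt_cosSin ω A B 0).hasDerivWithinAt hzero
    simpa [cosSin] using this
  exact ⟨hA, (mul_eq_zero.mp hderiv).resolve_left hω⟩

theorem mu0_congr {f g : ℝ → ℂ} (h : EqOn f g (Icc 0 1)) : mu0 f = mu0 g :=
  integral_congr (by rwa [uIcc_of_le zero_le_one])

theorem mu1_congr {f g : ℝ → ℂ} (h : EqOn f g (Icc 0 1)) : mu1 f = mu1 g :=
  integral_congr fun x hx => by rw [h (by rwa [uIcc_of_le zero_le_one] at hx)]

theorem mu0_cosSin {ω : ℂ} (hω : ω ≠ 0) (A B : ℂ) :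
    mu0 (cosSin ω A B) = (Complex.sin ω * A + (1 - Complex.cos ω) * B) / ω := by
  have hF : ∀ x : ℝ, HasDerivAt (cosSin ω (-B / ω) (A / ω)) (cosSin ω A B x) x := by
    intro x
    convert hasDerivAt_cosSin ω (-B / ω) (A / ω) x using 2 <;> field_simp
  rw [mu0, integral_eq_sub_of_hasDerivAt (fun x _ => hF x)
    ((continuous_cosSin ω A B).intervalIntegrable 0 1)]
  simp only [cosSin]
  push_cast
  simp only [mul_one, mul_zero, Complex.cos_zero, Complex.sin_zero]
  field_simp
  ring

theorem mu1_cosSin {ω : ℂ} (hω : ω ≠ 0) (A B : ℂ) :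
    mu1 (cosSin ω A B) =
      ((1 - Complex.cos ω) * A + (ω - Complex.sin ω) * B) / ω ^ 2 := by
  -- `(1 - x) H + G` with `H' = f` and `G' = H` is an antiderivative of `(1 - x) f`
  have hF : ∀ x : ℝ, HasDerivAt
      (fun y : ℝ => ((1 - y : ℝ) : ℂ) * cosSin ω (-B / ω) (A / ω) y
        + cosSin ω (-A / ω ^ 2) (-B / ω ^ 2) y)
      (((1 - x : ℝ) : ℂ) * cosSin ω A B x) x := by
    intro x
    have h1 : HasDerivAt (fun y : ℝ => ((1 - y : ℝ) : ℂ)) (-1) x := by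
      simpa using ((hasDerivAt_id x).const_sub 1).ofReal_comp
    refine ((h1.mul (hasDerivAt_cosSin ω (-B / ω) (A / ω) x)).add
      (hasDerivAt_cosSin ω (-A / ω ^ 2) (-B / ω ^ 2) x)).congr_deriv ?_
    simp only [cosSin]
    field_simp
    ring
  rw [mu1, integral_eq_sub_of_hasDerivAt (fun x _ => hF x)
    (by apply Continuous.intervalIntegrable; have := continuous_cosSin ω A B; fun_prop)]
  simp only [cosSin]
  push_cast
  simp only [mul_one, mul_zero, Complex.cos_zero, Complex.sin_zero]
  field_simp
  ring

noncomputable def momentMatrix (ω : ℂ) : Matrix (Fin 2) (Fin 2) ℂ :=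
  !![Complex.sin ω, 1 - Complex.cos ω; 1 - Complex.cos ω, ω - Complex.sin ω]

theorem det_momentMatrix (ω : ℂ) :
    (momentMatrix ω).det = ω * Complex.sin ω + 2 * Complex.cos ω - 2 := by
  rw [momentMatrix, Matrix.det_fin_two_of]
  linear_combination -Complex.sin_sq_add_cos_sq ω

theorem momentMatrix_mulVec_eq_zero_iff {ω : ℂ} (hω : ω ≠ 0) (v : Fin 2 → ℂ) :
    momentMatrix ω *ᵥ v = 0 ↔
      mu0 (cosSin ω (v 0) (v 1)) = 0 ∧ mu1 (cosSin ω (v 0) (v 1)) = 0 := by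
  simp [mu0_cosSin hω, mu1_cosSin hω, hω, momentMatrix, funext_iff, Fin.forall_fin_two,
    dotProduct]

theorem sub_sin_ne_zero {ω : ℂ} (hω : ω ≠ 0)
    (hD : ω * Complex.sin ω + 2 * Complex.cos ω - 2 = 0) : ω - Complex.sin ω ≠ 0 := by
  intro hs
  have hcos : (1 - Complex.cos ω) ^ 2 = 0 := by
    linear_combination -hD + Complex.sin ω * hs + Complex.sin_sq_add_cos_sq ω
  have hsin : Complex.sin ω ^ 2 = 0 := by
    linear_combination Complex.sin_sq_add_cos_sq ω +
      (1 + Complex.cos ω) * (pow_eq_zero_iff two_ne_zero).mp hcos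
  exact hω (by linear_combination hs + (pow_eq_zero_iff two_ne_zero).mp hsin)

theorem exists_solution_ne_zero_iff {ω : ℂ} (hω : ω ≠ 0) :
    (∃ u u' : ℝ → ℂ, (∃ x ∈ Icc (0:ℝ) 1, u x ≠ 0) ∧
        (∀ x ∈ Icc (0:ℝ) 1, HasDerivWithinAt u (u' x) (Icc 0 1) x) ∧
        (∀ x ∈ Icc (0:ℝ) 1, HasDerivWithinAt u' (-ω ^ 2 * u x) (Icc 0 1) x) ∧
        mu0 u = 0 ∧ mu1 u = 0) ↔
      ω * Complex.sin ω + 2 * Complex.cos ω - 2 = 0 := by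
  rw [← det_momentMatrix, ← Matrix.exists_mulVec_eq_zero_iff]
  constructor
  · rintro ⟨u, u', ⟨x, hx, hux⟩, hu, hu', h0, h1⟩
    have hrep := eqOn_cosSin_of_hasDerivWithinAt hω hu hu'
    refine ⟨![u 0, u' 0 / ω], fun hv => hux ?_, ?_⟩
    · have hcoef : u 0 = 0 ∧ u' 0 / ω = 0 := by
        simpa [funext_iff, Fin.forall_fin_two] using hv
      simp [hrep hx, cosSin, hcoef]
    · rw [momentMatrix_mulVec_eq_zero_iff hω]
      exact ⟨(mu0_congr hrep).symm.trans h0, (mu1_congr hrep).symm.trans h1⟩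
  · rintro ⟨v, hv, hMv⟩
    refine ⟨cosSin ω (v 0) (v 1), cosSin ω (ω * v 1) (-(ω * v 0)), ?_,
      fun x _ => (hasDerivAt_cosSin ω _ _ x).hasDerivWithinAt,
      fun x _ => (hasDerivAt_cosSin_neg_sq ω _ _ x).hasDerivWithinAt,
      (momentMatrix_mulVec_eq_zero_iff hω v).mp hMv⟩
    by_contra! hzero
    obtain ⟨hv0, hv1⟩ := eq_zero_of_eqOn_cosSin_zero hω one_pos hzero
    exact hv (funext fun i => by fin_cases i <;> assumption)

theorem exists_eqOn_mul_cosSin_of_mu1_eq_zero {ω : ℂ} (hω : ω ≠ 0)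
    (hD : ω * Complex.sin ω + 2 * Complex.cos ω - 2 = 0) {u u' : ℝ → ℂ}
    (hu : ∀ x ∈ Icc (0:ℝ) 1, HasDerivWithinAt u (u' x) (Icc 0 1) x)
    (hu' : ∀ x ∈ Icc (0:ℝ) 1, HasDerivWithinAt u' (-ω ^ 2 * u x) (Icc 0 1) x)
    (h1 : mu1 u = 0) :
    ∃ c : ℂ, ∀ x ∈ Icc (0:ℝ) 1,
      u x = c * cosSin ω (Complex.sin ω - ω) (1 - Complex.cos ω) x := by
  have hrep := eqOn_cosSin_of_hasDerivWithinAt hω hu hu'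
  have hrow : (1 - Complex.cos ω) * u 0 + (ω - Complex.sin ω) * (u' 0 / ω) = 0 := by
    rwa [mu1_congr hrep, mu1_cosSin hω, div_eq_zero_iff, or_iff_left (pow_ne_zero 2 hω)] at h1
  have hne := sub_sin_ne_zero hω hD
  refine ⟨-u 0 / (ω - Complex.sin ω), fun x hx => ?_⟩
  rw [hrep hx, ← cosSin_mul]
  congr 1
  · field_simp
    ring
  · rw [div_mul_eq_mul_div, eq_div_iff hne]
    linear_combination hrow

/-- For nonzero real `λ`: there is a nontrivial solution of `u″ = −λ²u` on `[0,1]` with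
`μ₀(u) = μ₁(u) = 0` iff `λ sin λ + 2 cos λ − 2 = 0`; moreover in that case every such
solution is a scalar multiple of `x ↦ (sin λ − λ) cos(λx) + (1 − cos λ) sin(λx)`. -/
theorem stmt13 (lam : ℝ) (hlam : lam ≠ 0) :
    ((∃ u u' : ℝ → ℂ,
        (∃ x ∈ Set.Icc (0:ℝ) 1, u x ≠ 0) ∧
        (∀ x ∈ Set.Icc (0:ℝ) 1, HasDerivWithinAt u (u' x) (Set.Icc (0:ℝ) 1) x) ∧
        (∀ x ∈ Set.Icc (0:ℝ) 1,
          HasDerivWithinAt u' (-(lam:ℂ)^2 * u x) (Set.Icc (0:ℝ) 1) x) ∧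
        mu0 u = 0 ∧ mu1 u = 0)
      ↔ lam * Real.sin lam + 2 * Real.cos lam - 2 = 0) ∧
    (lam * Real.sin lam + 2 * Real.cos lam - 2 = 0 →
      ∀ u u' : ℝ → ℂ,
        (∀ x ∈ Set.Icc (0:ℝ) 1, HasDerivWithinAt u (u' x) (Set.Icc (0:ℝ) 1) x) →
        (∀ x ∈ Set.Icc (0:ℝ) 1,
          HasDerivWithinAt u' (-(lam:ℂ)^2 * u x) (Set.Icc (0:ℝ) 1) x) →
        mu0 u = 0 → mu1 u = 0 →
        ∃ c : ℂ, ∀ x ∈ Set.Icc (0:ℝ) 1,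
          u x = c * (((Real.sin lam - lam) * Real.cos (lam * x) +
            (1 - Real.cos lam) * Real.sin (lam * x) : ℝ) : ℂ)) := by
  have hω : (lam : ℂ) ≠ 0 := Complex.ofReal_ne_zero.mpr hlam
  have hD : (lam : ℂ) * Complex.sin lam + 2 * Complex.cos lam - 2 = 0 ↔
      lam * Real.sin lam + 2 * Real.cos lam - 2 = 0 := by
    rw [← Complex.ofReal_sin, ← Complex.ofReal_cos]
    norm_cast
  refine ⟨(exists_solution_ne_zero_iff hω).trans hD, fun hDlam u u' hu hu' _ h1 => ?_⟩
  obtain ⟨c, hc⟩ := exists_eqOn_mul_cosSin_of_mu1_eq_zero hω (hD.mpr hDlam) hu hu' h1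
  refine ⟨c, fun x hx => (hc x hx).trans ?_⟩
  simp only [cosSin]
  push_cast
  ring
end

section
/- Let K be any complex 2×2 matrix and define, for nonzero real λ, D_K(λ) := det(K·𝓜(λ)·𝓑(λ) − 𝓒(λ)). Then there exists a constant C > 0 such that for every real λ with |λ| ≥ 1, one has |D_K(λ) − 2λ(1 − cos λ)| ≤ C. -/
/-- `𝓜(λ)` -/
noncomputable def Mmat (l : ℝ) : Matrix (Fin 2) (Fin 2) ℂ :=
  !![1/(l:ℂ), 0; 0, 1/(l:ℂ)^2]

/-- `𝓑(λ)` -/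
noncomputable def Bmat (l : ℝ) : Matrix (Fin 2) (Fin 2) ℂ :=
  !![(Real.sin l : ℂ), 1 - (Real.cos l : ℂ);
     1 - (Real.cos l : ℂ), (l:ℂ) - (Real.sin l : ℂ)]

/-- `𝓒(λ)` -/
noncomputable def Cmat (l : ℝ) : Matrix (Fin 2) (Fin 2) ℂ :=
  !![(l:ℂ) * (Real.sin l : ℂ) - (Real.cos l : ℂ),
     (l:ℂ) * (1 - (Real.cos l : ℂ)) - (Real.sin l : ℂ);
     (Real.cos l : ℂ) - 1, (Real.sin l : ℂ)]

/-- `D_K(λ) = det(K 𝓜(λ) 𝓑(λ) − 𝓒(λ))` -/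
noncomputable def DK (K : Matrix (Fin 2) (Fin 2) ℂ) (l : ℝ) : ℂ :=
  (K * (Mmat l * Bmat l) - Cmat l).det

/-- The error term as a polynomial in `x = 1/λ`, `s = sin λ`, `c = cos λ`. -/
noncomputable def Efun (K : Matrix (Fin 2) (Fin 2) ℂ) (x s c : ℂ) : ℂ :=
  (K 0 0 * K 1 1 - K 0 1 * K 1 0) * (x^2*s - x^3*s^2 - x^3*(1-c)^2)
  - s - K 0 0 * s^2*x - K 0 1 * s*(1-c)*x^2
  - K 1 1 * s + K 1 1 * s^2*x + c * K 1 0 * (1-c)*x + c * K 1 1 * x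
  - c * K 1 1 * s*x^2
  - K 0 0 * (1-c)^2*x + K 0 1 * (c-1)*x - K 0 1 * s*(c-1)*x^2
  + K 1 1 * (1-c)^2*x - K 1 0 * s^2*x - K 1 1 * s*(1-c)*x^2

set_option maxHeartbeats 1600000 in
lemma DK_eq (K : Matrix (Fin 2) (Fin 2) ℂ) (l : ℝ) (hl : (l:ℂ) ≠ 0) :
    DK K l - 2 * (l:ℂ) * (1 - (Real.cos l : ℂ))
      = Efun K ((l:ℂ))⁻¹ (Real.sin l : ℂ) (Real.cos l : ℂ) := by
  have h1 : (l:ℂ) * ((l:ℂ))⁻¹ = 1 := mul_inv_cancel₀ hl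
  have h2 : ((Real.sin l : ℂ))^2 + ((Real.cos l : ℂ))^2 = 1 := by
    norm_cast; exact Real.sin_sq_add_cos_sq l
  unfold DK Mmat Bmat Cmat Efun
  rw [Matrix.det_fin_two]
  simp only [Matrix.sub_apply, Matrix.mul_apply, Fin.sum_univ_two,
    Matrix.cons_val', Matrix.cons_val_zero, Matrix.cons_val_one,
    Matrix.head_cons, Matrix.head_fin_const, Matrix.empty_val',
    Matrix.cons_val_fin_one, Matrix.of_apply, Matrix.cons_val_succ, one_div]
  rw [show ((l:ℂ)^2)⁻¹ = ((l:ℂ))⁻¹^2 by rw [inv_pow]]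
  set x : ℂ := ((l:ℂ))⁻¹ with hx
  set s : ℂ := ((Real.sin l : ℂ)) with hs
  set c : ℂ := ((Real.cos l : ℂ)) with hc
  linear_combination
    ((l:ℂ) + (l:ℂ)^2*x + (l:ℂ)^3*x^2 + (l:ℂ)^4*x^3
      - c^2*((l:ℂ) + (l:ℂ)^2*x + (l:ℂ)^3*x^2 + (l:ℂ)^4*x^3)
      - s^2*((l:ℂ) + (l:ℂ)^2*x + (l:ℂ)^3*x^2 + (l:ℂ)^4*x^3)
      + K 1 1*x - K 1 1*c*x + K 1 1*c^2*x
      - K 1 1*s - K 1 1*s*(l:ℂ)*x + K 1 1*s^2*x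
      - K 0 1*x + K 0 1*c*x
      - K 0 1*K 1 0*s*x^2 + K 0 0*K 1 1*s*x^2) * h1
    + (l:ℂ)^5 * x^4 * h2

set_option maxHeartbeats 1600000 in
/-- For any complex `2×2` matrix `K` there is `C > 0` such that for all real `λ` with
`|λ| ≥ 1`, `|D_K(λ) − 2λ(1 − cos λ)| ≤ C`. -/
theorem stmt18 (K : Matrix (Fin 2) (Fin 2) ℂ) :
    ∃ C : ℝ, 0 < C ∧ ∀ l : ℝ, 1 ≤ |l| →
      ‖DK K l - 2 * (l:ℂ) * (1 - (Real.cos l : ℂ))‖ ≤ C := by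
  set S : Set (ℂ × ℂ × ℂ) :=
    (Metric.closedBall 0 1) ×ˢ (Metric.closedBall 0 1) ×ˢ (Metric.closedBall 0 1) with hS
  have hScomp : IsCompact S :=
    (isCompact_closedBall _ _).prod
      ((isCompact_closedBall _ _).prod (isCompact_closedBall _ _))
  have hSne : S.Nonempty := ⟨(0, 0, 0), by simp [hS]⟩
  have hcont : Continuous (fun p : ℂ × ℂ × ℂ => ‖Efun K p.1 p.2.1 p.2.2‖) := by
    unfold Efun; fun_prop
  obtain ⟨p₀, _, hp₀⟩ := hScomp.exists_isMaxOn hSne hcont.continuousOn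
  refine ⟨‖Efun K p₀.1 p₀.2.1 p₀.2.2‖ + 1, by positivity, ?_⟩
  intro l hl
  have hl0 : (l:ℂ) ≠ 0 := by
    simp only [ne_eq, Complex.ofReal_eq_zero]
    intro h; rw [h] at hl; norm_num at hl
  rw [DK_eq K l hl0]
  have hmem : (((l:ℂ))⁻¹, ((Real.sin l : ℂ)), ((Real.cos l : ℂ))) ∈ S := by
    refine ⟨?_, ?_, ?_⟩ <;> simp only [Metric.mem_closedBall, dist_zero_right]
    · rw [norm_inv, Complex.norm_real, Real.norm_eq_abs]
      exact inv_le_one_of_one_le₀ hl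
    · rw [Complex.norm_real, Real.norm_eq_abs]; exact Real.abs_sin_le_one l
    · rw [Complex.norm_real, Real.norm_eq_abs]; exact Real.abs_cos_le_one l
  have h2 : ‖Efun K ((l:ℂ))⁻¹ (Real.sin l : ℂ) (Real.cos l : ℂ)‖
      ≤ ‖Efun K p₀.1 p₀.2.1 p₀.2.2‖ :=
    isMaxOn_iff.mp hp₀ ((((l:ℂ))⁻¹, ((Real.sin l : ℂ)), ((Real.cos l : ℂ)))) hmem
  linarith
end

section
/- Let α ∈ ℂ, set (x,y) := (1,α)/√(1+|α|²), and let K be a hermitian 2×2 complex matrix. For nonzero z ∈ ℂ define D_{Y,K}(z) as the determinant of the 2×2 matrix whose first row is the row vector (−conj(y), conj(x))·𝓜(z)·𝓑(z) and whose second row is the row vector (conj(x), conj(y))·(K·𝓜(z)·𝓑(z) − 𝓒(z)). Then there exist a constant C > 0 and N ∈ ℕ such that for every integer k ≥ N, the function D_{Y,K} has exactly one zero in the open disc {z ∈ ℂ : |z − kπ| < C/k}. In particular the corresponding eigenvalue parameters satisfy λ_k = kπ + O(1/k). -/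
/-- `𝓜(z)` -/
noncomputable def MmatC (z : ℂ) : Matrix (Fin 2) (Fin 2) ℂ :=
  !![1/z, 0; 0, 1/z^2]

/-- `𝓑(z)` -/
noncomputable def BmatC (z : ℂ) : Matrix (Fin 2) (Fin 2) ℂ :=
  !![Complex.sin z, 1 - Complex.cos z;
     1 - Complex.cos z, z - Complex.sin z]

/-- `𝓒(z)` -/
noncomputable def CmatC (z : ℂ) : Matrix (Fin 2) (Fin 2) ℂ :=
  !![z * Complex.sin z - Complex.cos z, z * (1 - Complex.cos z) - Complex.sin z;
     Complex.cos z - 1, Complex.sin z]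

/-- `D_{Y,K}(z)`: determinant of the matrix whose first row is
`(−conj y, conj x)·𝓜(z)𝓑(z)` and second row is `(conj x, conj y)·(K𝓜(z)𝓑(z) − 𝓒(z))`. -/
noncomputable def DYK (K : Matrix (Fin 2) (Fin 2) ℂ) (x y : ℂ) (z : ℂ) : ℂ :=
  (Matrix.of
    ![Matrix.vecMul ![-(starRingEnd ℂ y), (starRingEnd ℂ) x] (MmatC z * BmatC z),
      Matrix.vecMul ![(starRingEnd ℂ) x, (starRingEnd ℂ) y]
        (K * (MmatC z * BmatC z) - CmatC z)]).det

/-!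
Expanding the determinant, `D_{Y,K}(z) = conj(x)² sin z + R(z)` where `R` is holomorphic on
`ℂ ∖ {0}` and `R(z) = O(1/|z|)` in the strip `|Im z| ≤ 1`; Cauchy's estimate then also gives
`R'(z) = O(1/|z|)` there. Since `x ≠ 0`, near `kπ` the function `D_{Y,K}` is a small perturbation
of `conj(x)² sin`, whose derivative at `kπ` is `A = (-1)ᵏ conj(x)²`. Hence the Newton-type map
`z ↦ z - A⁻¹ D_{Y,K}(z)` is a `1/2`-contraction of the closed disc of radius `C/k` about `kπ` into
its interior, and its unique fixed point is the unique zero of `D_{Y,K}` in the disc.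
-/

open Complex Metric Set Filter
open scoped Real

theorem existsUnique_zero_of_norm_deriv_sub_le {𝕜 : Type*} [RCLike 𝕜] {f : 𝕜 → 𝕜} {A c : 𝕜} {r : ℝ}
    (hA : A ≠ 0)
    (hf : ∀ z ∈ closedBall c r, DifferentiableAt 𝕜 f z)
    (hf' : ∀ z ∈ closedBall c r, ‖deriv f z - A‖ ≤ ‖A‖ / 2)
    (hc : ‖f c‖ < ‖A‖ * r / 2) :
    ∃! z, ‖z - c‖ < r ∧ f z = 0 := by
  have hA₀ : 0 < ‖A‖ := norm_pos_iff.2 hA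
  have hc_mem : c ∈ closedBall c r := mem_closedBall_self <| by
    by_contra! hr; nlinarith [norm_nonneg (f c)]
  set g : 𝕜 → 𝕜 := fun z ↦ z - A⁻¹ * f z
  have hg_fixed : ∀ z, g z = z ↔ f z = 0 := fun z ↦ by simp [g, hA]
  have hg_deriv : ∀ z ∈ closedBall c r, HasDerivAt g (1 - A⁻¹ * deriv f z) z := fun z hz ↦
    (hasDerivAt_id z).sub ((hf z hz).hasDerivAt.const_mul A⁻¹)
  have hg : LipschitzOnWith (1 / 2) g (closedBall c r) := by
    refine (convex_closedBall c r).lipschitzOnWith_of_nnnorm_deriv_le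
      (fun z hz ↦ (hg_deriv z hz).differentiableAt) fun z hz ↦ ?_
    rw [← NNReal.coe_le_coe, coe_nnnorm, (hg_deriv z hz).deriv]
    calc ‖1 - A⁻¹ * deriv f z‖ = ‖A‖⁻¹ * ‖deriv f z - A‖ := by
          rw [← norm_inv, ← norm_mul, ← norm_neg]; congr 1; field_simp; ring
      _ ≤ ‖A‖⁻¹ * (‖A‖ / 2) := by gcongr; exact hf' z hz
      _ = ((1 / 2 : NNReal) : ℝ) := by field_simp; norm_num
  have hgc : ‖g c - c‖ < r / 2 := by
    simpa [g, norm_mul, inv_mul_lt_iff₀ hA₀, mul_div_assoc] using hc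
  have hg_ball : ∀ z ∈ closedBall c r, ‖g z - c‖ < r := fun z hz ↦ by
    have := hg.dist_le_mul z hz c hc_mem
    rw [dist_eq_norm, dist_eq_norm] at this
    rw [mem_closedBall, dist_eq_norm] at hz
    calc ‖g z - c‖ ≤ ‖g z - g c‖ + ‖g c - c‖ := norm_sub_le_norm_sub_add_norm_sub _ _ _
      _ < r := by push_cast at this; linarith
  have hmaps : MapsTo g (closedBall c r) (closedBall c r) := fun z hz ↦
    mem_closedBall_iff_norm.2 (hg_ball z hz).le
  obtain ⟨z, hz, hfix, -⟩ := ContractingWith.exists_fixedPoint'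
    isClosed_closedBall.isComplete hmaps ⟨by norm_num, hg.mapsToRestrict hmaps⟩ hc_mem
    (edist_ne_top _ _)
  refine ⟨z, ⟨hfix ▸ hg_ball z hz, (hg_fixed z).1 hfix⟩, fun w ⟨hw, hfw⟩ ↦ ?_⟩
  have hw_mem : w ∈ closedBall c r := mem_closedBall_iff_norm.2 hw.le
  have := hg.dist_le_mul w hw_mem z hz
  rw [(hg_fixed w).2 hfw, hfix] at this
  push_cast at this
  exact dist_le_zero.1 (by linarith [dist_nonneg (x := w) (y := z)])

theorem Complex.norm_sin_le_exp_abs_im (z : ℂ) : ‖sin z‖ ≤ Real.exp |z.im| := by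
  have h₁ : ‖exp (-z * I)‖ ≤ Real.exp |z.im| := by
    rw [norm_exp, Real.exp_le_exp]; simp [le_abs_self]
  have h₂ : ‖exp (z * I)‖ ≤ Real.exp |z.im| := by
    rw [norm_exp, Real.exp_le_exp]; simp [neg_le_abs]
  calc ‖sin z‖ = ‖exp (-z * I) - exp (z * I)‖ / 2 := by simp [sin]
    _ ≤ (‖exp (-z * I)‖ + ‖exp (z * I)‖) / 2 := by gcongr; exact norm_sub_le _ _
    _ ≤ Real.exp |z.im| := by linarith

theorem Complex.norm_cos_le_exp_abs_im (z : ℂ) : ‖cos z‖ ≤ Real.exp |z.im| := by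
  have h₁ : ‖exp (z * I)‖ ≤ Real.exp |z.im| := by
    rw [norm_exp, Real.exp_le_exp]; simp [neg_le_abs]
  have h₂ : ‖exp (-z * I)‖ ≤ Real.exp |z.im| := by
    rw [norm_exp, Real.exp_le_exp]; simp [le_abs_self]
  calc ‖cos z‖ = ‖exp (z * I) + exp (-z * I)‖ / 2 := by simp [cos]
    _ ≤ (‖exp (z * I)‖ + ‖exp (-z * I)‖) / 2 := by gcongr; exact norm_add_le _ _
    _ ≤ Real.exp |z.im| := by linarith

theorem Complex.norm_sin_le_three {z : ℂ} (hz : |z.im| ≤ 1) : ‖sin z‖ ≤ 3 :=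
  (norm_sin_le_exp_abs_im z).trans <| (Real.exp_le_exp.2 hz).trans Real.exp_one_lt_three.le

theorem Complex.norm_cos_le_three {z : ℂ} (hz : |z.im| ≤ 1) : ‖cos z‖ ≤ 3 :=
  (norm_cos_le_exp_abs_im z).trans <| (Real.exp_le_exp.2 hz).trans Real.exp_one_lt_three.le

theorem Complex.norm_cos_sub_cos_ofReal_le {t : ℝ} {z : ℂ} (hz : ‖z - t‖ ≤ 1) :
    ‖cos z - cos t‖ ≤ 3 * ‖z - t‖ := by
  refine (convex_closedBall (t : ℂ) 1).norm_image_sub_le_of_norm_deriv_le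
    (fun w _ ↦ differentiableAt_cos) (fun w hw ↦ ?_) (mem_closedBall_self zero_le_one)
    (mem_closedBall_iff_norm.2 hz)
  rw [deriv_cos, norm_neg]
  refine norm_sin_le_three ?_
  simpa using (abs_im_le_norm (w - t)).trans (mem_closedBall_iff_norm.1 hw)

theorem norm_deriv_le_of_norm_le_div {R : ℂ → ℂ} {M : ℝ} (hM : 0 ≤ M)
    (hR : DifferentiableOn ℂ R {0}ᶜ) (hRM : ∀ z : ℂ, 1 ≤ ‖z‖ → |z.im| ≤ 1 → ‖R z‖ ≤ M / ‖z‖)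
    {z : ℂ} (hz : 2 ≤ ‖z‖) (hzi : |z.im| ≤ 1 / 2) : ‖deriv R z‖ ≤ 4 * M / ‖z‖ := by
  have hnorm : ∀ w ∈ closedBall z (1 / 2), ‖z‖ / 2 ≤ ‖w‖ := fun w hw ↦ by
    have := norm_sub_norm_le z w
    rw [mem_closedBall_iff_norm'] at hw
    linarith
  have hdiff : DiffContOnCl ℂ R (ball z (1 / 2)) := hR.diffContOnCl_ball fun w hw hw₀ ↦ by
    have := hnorm w hw
    rw [mem_singleton_iff.1 hw₀, norm_zero] at this
    linarith
  have hbound : ∀ w ∈ sphere z (1 / 2), ‖R w‖ ≤ 2 * M / ‖z‖ := fun w hw ↦ by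
    have hw' := hnorm w (sphere_subset_closedBall hw)
    have him : |w.im| ≤ 1 := by
      have := abs_im_le_norm (w - z)
      rw [mem_sphere_iff_norm.1 hw, sub_im] at this
      linarith [abs_sub_abs_le_abs_sub w.im z.im]
    calc ‖R w‖ ≤ M / ‖w‖ := hRM w (by linarith) him
      _ ≤ M / (‖z‖ / 2) := by gcongr
      _ = 2 * M / ‖z‖ := by ring
  calc ‖deriv R z‖ ≤ 2 * M / ‖z‖ / (1 / 2) :=
        norm_deriv_le_of_forall_mem_sphere_norm_le (by norm_num) hdiff hbound
    _ = 4 * M / ‖z‖ := by ring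

theorem norm_deriv_mul_sin_add_sub_le {s : ℂ} {R : ℂ → ℂ} {M : ℝ} (hM : 0 ≤ M)
    (hR : DifferentiableOn ℂ R {0}ᶜ) (hRM : ∀ z : ℂ, 1 ≤ ‖z‖ → |z.im| ≤ 1 → ‖R z‖ ≤ M / ‖z‖)
    {t : ℝ} {z : ℂ} (hzt : ‖z - t‖ ≤ 1 / 2) (hz : 2 ≤ ‖z‖) :
    ‖deriv (fun z ↦ s * sin z + R z) z - s * cos t‖ ≤ 3 * ‖s‖ * ‖z - t‖ + 4 * M / ‖z‖ := by
  have him : |z.im| ≤ 1 / 2 := by simpa using (abs_im_le_norm (z - t)).trans hzt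
  have hRz : DifferentiableAt ℂ R z :=
    hR.differentiableAt (isOpen_ne.mem_nhds (norm_pos_iff.1 (by linarith)))
  rw [deriv_fun_add (differentiableAt_sin.const_mul s) hRz, deriv_const_mul _ differentiableAt_sin,
    Complex.deriv_sin]
  calc ‖s * cos z + deriv R z - s * cos t‖ ≤ ‖s‖ * ‖cos z - cos t‖ + ‖deriv R z‖ := by
        rw [← norm_mul, mul_sub, add_sub_right_comm]; exact norm_add_le _ _
    _ ≤ ‖s‖ * (3 * ‖z - t‖) + 4 * M / ‖z‖ := by
        gcongr
        · exact norm_cos_sub_cos_ofReal_le (by linarith)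
        · exact norm_deriv_le_of_norm_le_div hM hR hRM hz him
    _ = 3 * ‖s‖ * ‖z - t‖ + 4 * M / ‖z‖ := by ring

theorem exists_eventually_existsUnique_zero_mul_sin_add {s : ℂ} {R : ℂ → ℂ} {M : ℝ} (hs : s ≠ 0)
    (hR : DifferentiableOn ℂ R {0}ᶜ) (hRM : ∀ z : ℂ, 1 ≤ ‖z‖ → |z.im| ≤ 1 → ‖R z‖ ≤ M / ‖z‖) :
    ∃ C > 0, ∀ᶠ k : ℕ in atTop,
      ∃! z : ℂ, ‖z - (((k : ℝ) * π : ℝ) : ℂ)‖ < C / k ∧ s * sin z + R z = 0 := by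
  have hs₀ : 0 < ‖s‖ := norm_pos_iff.2 hs
  have hM : 0 ≤ M := by simpa using (norm_nonneg _).trans (hRM 1 (by simp) (by simp))
  set C := 1 + M / ‖s‖
  have hC : 0 < C := by positivity
  refine ⟨C, hC, ?_⟩
  filter_upwards [eventually_ge_atTop 1,
    (tendsto_const_div_atTop_nhds_zero_nat C).eventually (eventually_le_nhds one_half_pos),
    (tendsto_const_div_atTop_nhds_zero_nat (3 * ‖s‖ * C + 4 * M)).eventually
      (eventually_le_nhds (half_pos hs₀))] with k hk hCk hk_deriv
  have hk₁ : (1 : ℝ) ≤ k := by exact_mod_cast hk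
  set t : ℝ := k * π
  have ht : 2 * k + 1 / 2 ≤ t := by nlinarith [Real.pi_gt_three]
  have htn : ‖(t : ℂ)‖ = t := by rw [Complex.norm_real, Real.norm_of_nonneg (by positivity)]
  have hball : ∀ z ∈ closedBall (t : ℂ) (C / k), ‖z - t‖ ≤ 1 / 2 ∧ 2 * (k : ℝ) ≤ ‖z‖ :=
    fun z hz ↦ by
      rw [mem_closedBall_iff_norm] at hz
      have := norm_sub_norm_le (t : ℂ) z
      rw [norm_sub_rev, htn] at this
      constructor <;> linarith
  have hsin : sin (t : ℂ) = 0 := by exact_mod_cast Real.sin_nat_mul_pi k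
  have hcos : cos (t : ℂ) = (-1) ^ k := by exact_mod_cast Real.cos_nat_mul_pi k
  have hA : ‖s * (-1) ^ k‖ = ‖s‖ := by simp
  refine existsUnique_zero_of_norm_deriv_sub_le (A := s * (-1) ^ k) (by simp [hs]) ?_ ?_ ?_
  · intro z hz
    have hz₀ : z ≠ 0 := norm_pos_iff.1 (by linarith [(hball z hz).2])
    exact (differentiableAt_sin.const_mul s).add (hR.differentiableAt (isOpen_ne.mem_nhds hz₀))
  · intro z hz
    obtain ⟨hzt, hz2k⟩ := hball z hz
    rw [hA, ← hcos]
    calc _ ≤ 3 * ‖s‖ * ‖z - t‖ + 4 * M / ‖z‖ :=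
          norm_deriv_mul_sin_add_sub_le hM hR hRM hzt (by linarith)
      _ ≤ 3 * ‖s‖ * (C / k) + 4 * M / k := by
          gcongr
          · exact mem_closedBall_iff_norm.1 hz
          · linarith
      _ = (3 * ‖s‖ * C + 4 * M) / k := by ring
      _ ≤ ‖s‖ / 2 := hk_deriv
  · rw [hsin, mul_zero, zero_add, hA]
    calc ‖R t‖ ≤ M / ‖(t : ℂ)‖ := hRM t (by rw [htn]; linarith) (by simp)
      _ = M / t := by rw [htn]
      _ ≤ M / (2 * k) := by gcongr; linarith
      _ < (‖s‖ + M) / (2 * k) := by gcongr; linarith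
      _ = ‖s‖ * (C / k) / 2 := by simp only [C]; field_simp

/-- For `s = conj(x)²` and suitable `Q`, `m`, this is `D_{Y,K}(z) - s sin z`. -/
noncomputable def dykRemainder (s Q m : ℂ) (z : ℂ) : ℂ :=
  (s * (cos z - 2) + m * (1 - cos z)) / z + (s - Q) * sin z / z ^ 2 + 2 * Q * (1 - cos z) / z ^ 3

theorem differentiableOn_dykRemainder (s Q m : ℂ) :
    DifferentiableOn ℂ (dykRemainder s Q m) {0}ᶜ := fun z (hz : z ≠ 0) ↦ by
  have := differentiable_sin
  have := differentiable_cos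
  unfold dykRemainder
  apply DifferentiableAt.differentiableWithinAt
  fun_prop (disch := simp [hz])

theorem norm_div_add_div_sq_add_div_cube_le (a b c : ℂ) {z : ℂ} (hz : 1 ≤ ‖z‖) :
    ‖a / z + b / z ^ 2 + c / z ^ 3‖ ≤ (‖a‖ + ‖b‖ + ‖c‖) / ‖z‖ := by
  have h₂ : ‖z‖ ≤ ‖z‖ ^ 2 := by nlinarith
  have h₃ : ‖z‖ ≤ ‖z‖ ^ 3 := by nlinarith
  calc ‖a / z + b / z ^ 2 + c / z ^ 3‖ ≤ ‖a‖ / ‖z‖ + ‖b‖ / ‖z‖ ^ 2 + ‖c‖ / ‖z‖ ^ 3 := by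
        rw [← norm_pow, ← norm_pow, ← norm_div, ← norm_div, ← norm_div]; exact norm_add₃_le
    _ ≤ ‖a‖ / ‖z‖ + ‖b‖ / ‖z‖ + ‖c‖ / ‖z‖ := by gcongr
    _ = (‖a‖ + ‖b‖ + ‖c‖) / ‖z‖ := by ring

theorem exists_norm_dykRemainder_le (s Q m : ℂ) :
    ∃ M, ∀ z : ℂ, 1 ≤ ‖z‖ → |z.im| ≤ 1 → ‖dykRemainder s Q m z‖ ≤ M / ‖z‖ := by
  refine ⟨‖s‖ * 5 + ‖m‖ * 4 + ‖s - Q‖ * 3 + 2 * ‖Q‖ * 4, fun z hz him ↦ ?_⟩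
  have hsin := norm_sin_le_three him
  have hcos := norm_cos_le_three him
  have hcos₁ : ‖cos z - 2‖ ≤ 5 := (norm_sub_le _ _).trans (by norm_num; linarith)
  have hcos₂ : ‖1 - cos z‖ ≤ 4 := (norm_sub_le _ _).trans (by norm_num; linarith)
  refine (norm_div_add_div_sq_add_div_cube_le _ _ _ hz).trans ?_
  gcongr
  · exact (norm_add_le _ _).trans (by simp only [norm_mul]; gcongr)
  · rw [norm_mul]; gcongr
  · rw [norm_mul, norm_mul]; gcongr; norm_num

theorem exists_DYK_eq_mul_sin_add_dykRemainder (K : Matrix (Fin 2) (Fin 2) ℂ) (x y : ℂ) :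
    ∃ Q m : ℂ, DYK K x y =
      fun z ↦ (starRingEnd ℂ) x ^ 2 * sin z + dykRemainder ((starRingEnd ℂ) x ^ 2) Q m z := by
  set u := (starRingEnd ℂ) x
  set v := (starRingEnd ℂ) y
  refine ⟨K 0 0 * u ^ 2 + (K 0 1 + K 1 0) * u * v + K 1 1 * v ^ 2, 2 * (v ^ 2 - u * v),
    funext fun z ↦ ?_⟩
  rcases eq_or_ne z 0 with rfl | hz
  · simp [DYK, MmatC, dykRemainder, Matrix.det_fin_two, Matrix.vecMul, dotProduct]
  simp only [DYK, MmatC, BmatC, CmatC, dykRemainder, Matrix.det_fin_two, Matrix.vecMul,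
    dotProduct, Fin.sum_univ_two, Matrix.mul_apply, Matrix.sub_apply, Matrix.of_apply,
    Matrix.cons_val_zero, Matrix.cons_val_one]
  field_simp
  linear_combination ((K 0 0 * u ^ 2 + (K 0 1 + K 1 0) * u * v + K 1 1 * v ^ 2) * z
    + (v ^ 2 - u * v - u ^ 2) * z ^ 3) * sin_sq_add_cos_sq z

theorem stmt19_general (α : ℂ) (K : Matrix (Fin 2) (Fin 2) ℂ)
    (x y : ℂ)
    (hx : x = (1 : ℂ) / ((Real.sqrt (1 + ‖α‖ ^ 2) : ℝ) : ℂ)) :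
    ∃ C : ℝ, 0 < C ∧ ∃ N : ℕ, ∀ k : ℕ, N ≤ k →
      ∃! z : ℂ, ‖z - (((k:ℝ) * Real.pi : ℝ) : ℂ)‖ < C / (k:ℝ) ∧ DYK K x y z = 0 := by
  have hx₀ : (starRingEnd ℂ) x ^ 2 ≠ 0 := by
    have : 0 < Real.sqrt (1 + ‖α‖ ^ 2) := by positivity
    simp [hx, this.ne']
  obtain ⟨Q, m, hD⟩ := exists_DYK_eq_mul_sin_add_dykRemainder K x y
  obtain ⟨M, hM⟩ := exists_norm_dykRemainder_le ((starRingEnd ℂ) x ^ 2) Q m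
  obtain ⟨C, hC, hzero⟩ := exists_eventually_existsUnique_zero_mul_sin_add hx₀
    (differentiableOn_dykRemainder _ Q m) hM
  obtain ⟨N, hN⟩ := eventually_atTop.1 hzero
  exact ⟨C, hC, N, fun k hk ↦ hD ▸ hN k hk⟩

/-- For `Y` spanned by `(1,α)`, with `(x,y) = (1,α)/√(1+|α|²)` and `K` hermitian, there are
`C > 0` and `N` such that for every `k ≥ N` the function `D_{Y,K}` has exactly one zero in the
open disc of radius `C/k` around `kπ`. -/
theorem stmt19 (α : ℂ) (K : Matrix (Fin 2) (Fin 2) ℂ) (hK : K.IsHermitian)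
    (x y : ℂ)
    (hx : x = (1 : ℂ) / ((Real.sqrt (1 + ‖α‖ ^ 2) : ℝ) : ℂ))
    (hy : y = α / ((Real.sqrt (1 + ‖α‖ ^ 2) : ℝ) : ℂ)) :
    ∃ C : ℝ, 0 < C ∧ ∃ N : ℕ, ∀ k : ℕ, N ≤ k →
      ∃! z : ℂ, ‖z - (((k:ℝ) * Real.pi : ℝ) : ℂ)‖ < C / (k:ℝ) ∧ DYK K x y z = 0 :=
  stmt19_general α K x y hx
end
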